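/- arXiv:1309.6401 — 8 statements merged into one kernel-verified Lean document; each statement's English description precedes it below -/
import Mathlib

section
/- Let K be a number field, let c ∈ K, and let P ∈ K be a preperiodic point of the map f_c(z) = z² + c. Then H_K(P) ≤ ((1 + √5)/2)^{[K:ℚ]} · H_K(c)^{1/2}. -/
open NumberField IsDedekindDomain
open scoped NNReal

/-- The normalized absolute value `‖·‖_v` attached to a finite place `v` of a number field `K`,
with `‖x‖_v = N(𝔭)^(-ord_𝔭 x)` for the maximal ideal `𝔭` corresponding to `v`. -/
noncomputable def finiteAbs {K : Type*} [Field K] [NumberField K]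
    (v : HeightOneSpectrum (𝓞 K)) (x : K) : ℝ :=
  WithZeroMulInt.toNNReal
    (show ((Ideal.absNorm v.asIdeal : ℝ≥0)) ≠ 0 by
      simp only [ne_eq, Nat.cast_eq_zero, Ideal.absNorm_eq_zero_iff]
      exact v.ne_bot)
    (v.valuation K x)

/-- The relative height `H_K(x)` of an element `x` of a number field `K`:
the product over the infinite places `w` of `max (w x) 1 ^ mult w` times the product over
the finite places `v` of `max ‖x‖_v 1`. -/
noncomputable def relHeight {K : Type*} [Field K] [NumberField K] (x : K) : ℝ :=
  (∏ w : InfinitePlace K, max (w x) 1 ^ w.mult) *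
    ∏ᶠ v : HeightOneSpectrum (𝓞 K), max (finiteAbs v x) 1

/-!
At a nonarchimedean place, if `|P|_v² > max(|c|_v, 1)` then `|P² + c|_v = |P|_v²`, and the
same holds all along the orbit, whose absolute values then increase strictly; so this cannot
happen for a preperiodic `P`. At an archimedean place, with `s = max(|c|_v, 1)^(1/2)`, every
`|z| > φ s` satisfies `|z² + c| ≥ |z|² - s² > |z|` because `φ² = φ + 1`, and the orbit escapes
again. Hence `max(|P|_v, 1)² ≤ φ² max(|c|_v, 1)` at the archimedean places and
`max(|P|_v, 1)² ≤ max(|c|_v, 1)` at the finite ones. Multiplying over all places, where the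
archimedean multiplicities add up to `[K:ℚ]`, gives `H_K(P)² ≤ φ^(2[K:ℚ]) H_K(c)`.
Since `H_K` is `Height.mulHeight₁`, the argument works for any field with admissible absolute
values.
-/

open Function Real goldenRatio

theorem Function.strictMono_comp_iterate_of_mapsTo {α β : Type*} [Preorder β] {f : α → α}
    {g : α → β} {S : Set α} (hS : Set.MapsTo f S S) (hg : ∀ x ∈ S, g x < g (f x)) {x : α}
    (hx : x ∈ S) : StrictMono fun n => g (f^[n] x) :=
  strictMono_nat_of_lt_succ fun n => by
    simpa only [iterate_succ_apply'] using hg _ (hS.iterate n hx)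

namespace AbsoluteValue

variable {R : Type*} [Ring R] [Nontrivial R] {c P : R}

theorem max_one_sq_le_of_isNonarchimedean_of_preperiodic {S : Type*} [Field S] [LinearOrder S]
    [IsStrictOrderedRing S] (abv : AbsoluteValue R S) (hna : IsNonarchimedean abv)
    (hP : ∃ m n : ℕ, m < n ∧ (fun z : R => z ^ 2 + c)^[m] P = (fun z : R => z ^ 2 + c)^[n] P) :
    max (abv P) 1 ^ 2 ≤ max (abv c) 1 := by
  set U := {x : R | max (abv c) 1 < abv x ^ 2}
  have one_lt {x} (hx : x ∈ U) : 1 < abv x :=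
    (one_lt_pow_iff_of_nonneg (abv.nonneg x) two_ne_zero).mp ((le_max_right _ _).trans_lt hx)
  have map_step {x} (hx : x ∈ U) : abv (x ^ 2 + c) = abv x ^ 2 := by
    rw [hna.add_eq_left_of_lt (by rw [abv.map_pow]; exact (le_max_left _ _).trans_lt hx),
      abv.map_pow]
  have hg : ∀ x ∈ U, abv x < abv (x ^ 2 + c) := fun x hx => by
    rw [map_step hx]; exact lt_self_pow₀ (one_lt hx) one_lt_two
  have hU : Set.MapsTo (fun z : R => z ^ 2 + c) U U := fun x hx =>
    hx.trans (pow_lt_pow_left₀ (hg x hx) (abv.nonneg x) two_ne_zero)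
  by_contra! hlt
  have hPU : P ∈ U := by
    rcases le_total (abv P) 1 with h | h
    · rw [max_eq_right h, one_pow] at hlt; exact absurd hlt (le_max_right _ _).not_gt
    · rwa [max_eq_left h] at hlt
  obtain ⟨m, n, hmn, heq⟩ := hP
  exact (strictMono_comp_iterate_of_mapsTo hU hg hPU hmn).ne (congrArg abv heq)

theorem le_of_preperiodic (abv : AbsoluteValue R ℝ) {r : ℝ} (hr : 0 < r)
    (hc : abv c ≤ r ^ 2 - r)
    (hP : ∃ m n : ℕ, m < n ∧ (fun z : R => z ^ 2 + c)^[m] P = (fun z : R => z ^ 2 + c)^[n] P) :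
    abv P ≤ r := by
  have one_le_r : 1 ≤ r := by nlinarith [abv.nonneg c]
  set U := {x : R | r < abv x}
  -- for `t = abv x > r ≥ 1`: `t ^ 2 - t > r ^ 2 - r ≥ abv c`
  have hg : ∀ x ∈ U, abv x < abv (x ^ 2 + c) := fun x (hx : r < abv x) => by
    have := abv.le_add (x ^ 2) c
    rw [abv.map_pow] at this
    nlinarith
  have hU : Set.MapsTo (fun z : R => z ^ 2 + c) U U := fun x hx => lt_trans hx (hg x hx)
  by_contra! hPU
  obtain ⟨m, n, hmn, heq⟩ := hP
  exact (strictMono_comp_iterate_of_mapsTo hU hg hPU hmn).ne (congrArg abv heq)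

theorem max_one_sq_le_of_preperiodic (abv : AbsoluteValue R ℝ)
    (hP : ∃ m n : ℕ, m < n ∧ (fun z : R => z ^ 2 + c)^[m] P = (fun z : R => z ^ 2 + c)^[n] P) :
    max (abv P) 1 ^ 2 ≤ φ ^ 2 * max (abv c) 1 := by
  set s := √(max (abv c) 1)
  have one_le_s : 1 ≤ s := Real.one_le_sqrt.mpr (le_max_right _ _)
  have hs : s ^ 2 = max (abv c) 1 := Real.sq_sqrt (zero_le_one.trans (le_max_right _ _))
  have one_le_φs : 1 ≤ φ * s := one_le_mul_of_one_le_of_one_le one_lt_goldenRatio.le one_le_s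
  -- `(φ s) ^ 2 - φ s = s ^ 2 + φ s (s - 1)` since `φ ^ 2 = φ + 1`
  have hc : abv c ≤ (φ * s) ^ 2 - φ * s := by
    have : s ^ 2 ≤ (φ * s) ^ 2 - φ * s := by
      rw [mul_pow, goldenRatio_sq]; nlinarith [goldenRatio_pos]
    exact (le_max_left _ _).trans (hs ▸ this)
  calc max (abv P) 1 ^ 2 ≤ (φ * s) ^ 2 := by
        gcongr
        exact max_le (abv.le_of_preperiodic (by positivity) hc hP) one_le_φs
    _ = φ ^ 2 * max (abv c) 1 := by rw [mul_pow, hs]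

end AbsoluteValue

namespace Height

open AdmissibleAbsValues

variable {K : Type*} [Field K] [AdmissibleAbsValues K]

theorem hasFiniteMulSupport_max_nonarchAbsVal_one (x : K) :
    HasFiniteMulSupport fun v : nonarchAbsVal (K := K) => max (v.val x) 1 := by
  rcases eq_or_ne x 0 with rfl | hx
  · simp [HasFiniteMulSupport]
  · fun_prop

theorem mulHeight₁_sq_le_of_max_one_sq_le {x y : K} {C : ℝ} (hC : 0 ≤ C)
    (harch : ∀ v ∈ archAbsVal (K := K), max (v x) 1 ^ 2 ≤ C * max (v y) 1)
    (hnonarch : ∀ v ∈ nonarchAbsVal (K := K), max (v x) 1 ^ 2 ≤ max (v y) 1) :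
    mulHeight₁ x ^ 2 ≤ C ^ totalWeight K * mulHeight₁ y := by
  simp only [mulHeight₁_eq, totalWeight]
  rw [mul_pow, ← Multiset.prod_map_pow, finprod_pow (hasFiniteMulSupport_max_nonarchAbsVal_one x),
    ← mul_assoc, ← Multiset.prod_replicate, ← Multiset.map_const', ← Multiset.prod_map_mul]
  exact mul_le_mul (Multiset.prod_map_le_prod_map₀ _ _ (fun _ _ => by positivity) harch)
    (finprod_le_finprod ((hasFiniteMulSupport_max_nonarchAbsVal_one x).pow 2)
      (fun _ => by positivity) (hasFiniteMulSupport_max_nonarchAbsVal_one y)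
      fun v => hnonarch v.val v.prop)
    (finprod_nonneg fun _ => by positivity) (Multiset.prod_map_nonneg fun _ _ => by positivity)

theorem mulHeight₁_le_of_preperiodic {c P : K}
    (hP : ∃ m n : ℕ, m < n ∧ (fun z : K => z ^ 2 + c)^[m] P = (fun z : K => z ^ 2 + c)^[n] P) :
    mulHeight₁ P ≤ φ ^ totalWeight K * √(mulHeight₁ c) := by
  have hsq : mulHeight₁ P ^ 2 ≤ (φ ^ totalWeight K) ^ 2 * mulHeight₁ c :=
    pow_right_comm φ 2 (totalWeight K) ▸ mulHeight₁_sq_le_of_max_one_sq_le (by positivity)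
      (fun v _ => v.max_one_sq_le_of_preperiodic hP)
      (fun v hv => v.max_one_sq_le_of_isNonarchimedean_of_preperiodic (isNonarchimedean v hv) hP)
  calc mulHeight₁ P ≤ √((φ ^ totalWeight K) ^ 2 * mulHeight₁ c) := Real.le_sqrt_of_sq_le hsq
    _ = φ ^ totalWeight K * √(mulHeight₁ c) := by
        rw [Real.sqrt_mul (by positivity), Real.sqrt_sq (by positivity)]

end Height

theorem finiteAbs_eq_finitePlace_mk {K : Type*} [Field K] [NumberField K]
    (v : HeightOneSpectrum (𝓞 K)) (x : K) : finiteAbs v x = FinitePlace.mk v x :=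
  (FinitePlace.norm_embedding' v x).symm

theorem relHeight_eq_mulHeight₁ {K : Type*} [Field K] [NumberField K] (x : K) :
    relHeight x = Height.mulHeight₁ x := by
  rw [NumberField.mulHeight₁_eq, relHeight,
    ← finprod_comp_equiv FinitePlace.equivHeightOneSpectrum.symm]
  simp only [finiteAbs_eq_finitePlace_mk]
  rfl

/-- If `P ∈ K` is preperiodic for `f_c(z) = z² + c`, then
`H_K(P) ≤ ((1 + √5)/2)^[K:ℚ] ⬝ H_K(c)^(1/2)`. -/
theorem preperiodic_relHeight_le {K : Type*} [Field K] [NumberField K] (c P : K)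
    (hP : ∃ m n : ℕ, m < n ∧ (fun z : K => z ^ 2 + c)^[m] P = (fun z : K => z ^ 2 + c)^[n] P) :
    relHeight P ≤ ((1 + Real.sqrt 5) / 2) ^ Module.finrank ℚ K * Real.sqrt (relHeight c) := by
  rw [relHeight_eq_mulHeight₁, relHeight_eq_mulHeight₁, ← totalWeight_eq_finrank]
  exact Height.mulHeight₁_le_of_preperiodic hP
end

section
/- Let c ∈ ℂ be an algebraic number with [ℚ(c) : ℚ] ≤ 2, and suppose the map f_c(z) = z² + c is postcritically finite, i.e., 0 is preperiodic for f_c. Then c ∈ {0, −1, −2, i, −i}. -/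
open IntermediateField Polynomial

/-!
If `0` is preperiodic for `f_c`, its orbit is finite, hence bounded, and the usual escape
argument bounds every orbit point by `2`. The orbit point `f_c^[k] 0` is the value at `c` of a
monic integer polynomial `P_k`, so `c` is an algebraic integer, and so is every conjugate `c'`
of `c`, which is again postcritically finite. For `[ℚ(c) : ℚ] ≤ 2` the trace `s = c + c'` and
norm `p = c c'` are integers, every orbit point is `u + v c` with `u, v ∈ ℤ`, and the integer
trace and norm of `u + v c` are at most `4` in absolute value because both conjugates lie in the
disc of radius `2`. Following the integer pairs `(u, v)` for five steps leaves only the seven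
pairs `(s, p)` corresponding to `c ∈ {0, -1, -2, ±i}`.
-/

abbrev quadMap {R : Type*} [Semiring R] (c z : R) : R := z ^ 2 + c

namespace Function

variable {α : Type*} {f : α → α} {x : α} {m n : ℕ}

theorem exists_lt_iterate_eq_of_iterate_eq (hmn : m < n) (h : f^[m] x = f^[n] x) (k : ℕ) :
    ∃ i < n, f^[i] x = f^[k] x := by
  by_cases hk : k < n
  · exact ⟨k, hk, rfl⟩
  have hper : IsPeriodicPt f (n - m) (f^[m] x) := by
    rw [IsPeriodicPt, IsFixedPt, ← iterate_add_apply, Nat.sub_add_cancel hmn.le, h]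
  refine ⟨(k - m) % (n - m) + m, by have := Nat.mod_lt (k - m) (Nat.sub_pos_of_lt hmn); omega, ?_⟩
  rw [iterate_add_apply, hper.iterate_mod_apply, ← iterate_add_apply, Nat.sub_add_cancel (by omega)]

theorem finite_range_iterate_of_iterate_eq (hmn : m < n) (h : f^[m] x = f^[n] x) :
    (Set.range fun k => f^[k] x).Finite :=
  ((Set.finite_Iio n).image fun i => f^[i] x).subset <| by
    rintro _ ⟨k, rfl⟩
    obtain ⟨i, hi, hik⟩ := exists_lt_iterate_eq_of_iterate_eq hmn h k
    exact ⟨i, hi, hik⟩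

end Function

section Escape

variable {K : Type*} [NormedField K] {c : K}

/-- Past radius `max 2 ‖c‖`, each step of `f_c` adds at least `‖z‖ - 2` to the norm. -/
theorem norm_le_two_of_bddAbove_orbit {z : K} (hcz : ‖c‖ ≤ ‖z‖)
    (hb : BddAbove (Set.range fun j => ‖(quadMap c)^[j] z‖)) : ‖z‖ ≤ 2 := by
  by_contra! hz
  have grow : ∀ j : ℕ, ‖z‖ + j * (‖z‖ - 2) ≤ ‖(quadMap c)^[j] z‖ := by
    intro j
    induction j with
    | zero => simp
    | succ j ih =>
      rw [Function.iterate_succ_apply']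
      set w := (quadMap c)^[j] z
      have hw : ‖w‖ ^ 2 ≤ ‖quadMap c w‖ + ‖c‖ := by
        calc ‖w‖ ^ 2 = ‖quadMap c w - c‖ := by rw [quadMap, add_sub_cancel_right, norm_pow]
          _ ≤ ‖quadMap c w‖ + ‖c‖ := norm_sub_le _ _
      have hj : (0 : ℝ) ≤ j * (‖z‖ - 2) := by positivity
      push_cast
      nlinarith [mul_nonneg (by linarith : (0 : ℝ) ≤ ‖w‖ - 1) (by linarith : (0 : ℝ) ≤ ‖w‖ - 2)]
  obtain ⟨B, hB⟩ := hb
  obtain ⟨j, hj⟩ := exists_nat_gt ((B - ‖z‖) / (‖z‖ - 2))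
  rw [div_lt_iff₀ (by linarith)] at hj
  linarith [grow j, hB ⟨j, rfl⟩]

theorem norm_iterate_le_two_of_bddAbove
    (hb : BddAbove (Set.range fun k => ‖(quadMap c)^[k] 0‖)) (k : ℕ) :
    ‖(quadMap c)^[k] 0‖ ≤ 2 := by
  have tail : ∀ k, BddAbove (Set.range fun j => ‖(quadMap c)^[j] ((quadMap c)^[k] 0)‖) :=
    fun k => hb.mono <| Set.range_subset_iff.2 fun j =>
      Set.mem_range.2 ⟨j + k, by rw [Function.iterate_add_apply]⟩
  have hc : ‖c‖ ≤ 2 := by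
    simpa [quadMap] using norm_le_two_of_bddAbove_orbit (by simp [quadMap]) (tail 1)
  rcases le_total ‖c‖ ‖(quadMap c)^[k] 0‖ with h | h
  · exact norm_le_two_of_bddAbove_orbit h (tail k)
  · exact h.trans hc

theorem norm_iterate_le_two_of_iterate_eq {m n : ℕ} (hmn : m < n)
    (h : (quadMap c)^[m] 0 = (quadMap c)^[n] 0) (k : ℕ) : ‖(quadMap c)^[k] 0‖ ≤ 2 := by
  refine norm_iterate_le_two_of_bddAbove ?_ k
  refine ((Function.finite_range_iterate_of_iterate_eq hmn h).image norm).bddAbove.mono ?_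
  rintro _ ⟨k, rfl⟩
  exact ⟨_, ⟨k, rfl⟩, rfl⟩

end Escape

noncomputable def pcfPoly (k : ℕ) : ℤ[X] := (quadMap X)^[k] 0

theorem aeval_pcfPoly {A : Type*} [CommRing A] (c : A) (k : ℕ) :
    aeval c (pcfPoly k) = (quadMap c)^[k] 0 := by
  have : Function.Semiconj (aeval c : ℤ[X] → A) (quadMap X) (quadMap c) := fun q => by
    simp [quadMap]
  simpa [pcfPoly] using this.iterate_right k 0

theorem isMonicOfDegree_pcfPoly (k : ℕ) : IsMonicOfDegree (pcfPoly (k + 1)) (2 ^ k) := by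
  induction k with
  | zero => simpa [pcfPoly, quadMap] using isMonicOfDegree_X ℤ
  | succ k ih =>
    rw [pcfPoly, Function.iterate_succ_apply', ← pcfPoly, pow_succ]
    exact (ih.pow 2).add_right (by
      rw [natDegree_X]; have := k.one_le_two_pow; omega)

theorem natDegree_pcfPoly_lt {m n : ℕ} (hmn : m < n) : (pcfPoly m).natDegree < 2 ^ (n - 1) := by
  rcases m with _ | m
  · simp [pcfPoly]
  · rw [(isMonicOfDegree_pcfPoly m).natDegree_eq]
    exact Nat.pow_lt_pow_right one_lt_two (by omega)

theorem isMonicOfDegree_pcfPoly_sub {m n : ℕ} (hmn : m < n) :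
    IsMonicOfDegree (pcfPoly n - pcfPoly m) (2 ^ (n - 1)) := by
  obtain ⟨n, rfl⟩ : ∃ n', n = n' + 1 := ⟨n - 1, by omega⟩
  exact (isMonicOfDegree_pcfPoly n).sub (natDegree_pcfPoly_lt hmn)

section Integrality

variable {m n : ℕ}

theorem isIntegral_of_iterate_eq {A : Type*} [CommRing A] {c : A} (hmn : m < n)
    (h : (quadMap c)^[m] 0 = (quadMap c)^[n] 0) : IsIntegral ℤ c :=
  ⟨_, (isMonicOfDegree_pcfPoly_sub hmn).monic, by
    rw [← aeval_def, map_sub, aeval_pcfPoly, aeval_pcfPoly, h, sub_self]⟩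

theorem iterate_eq_of_aeval_minpoly_eq_zero {K : Type*} [Field K] [Algebra ℚ K] {c c' : K}
    (h : (quadMap c)^[m] 0 = (quadMap c)^[n] 0)
    (hc' : aeval c' (minpoly ℚ c) = 0) : (quadMap c')^[m] 0 = (quadMap c')^[n] 0 := by
  obtain ⟨q, hq⟩ : minpoly ℚ c ∣ (pcfPoly n - pcfPoly m).map (algebraMap ℤ ℚ) :=
    minpoly.dvd _ _ (by rw [aeval_map_algebraMap, map_sub, aeval_pcfPoly, aeval_pcfPoly, h,
      sub_self])
  have := congrArg (aeval c') hq
  rw [map_mul, hc', zero_mul, aeval_map_algebraMap, map_sub, aeval_pcfPoly, aeval_pcfPoly,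
    sub_eq_zero] at this
  exact this.symm

/-- `c'` is the other root of the integer minimal polynomial of `c` (`c' = c` when `c ∈ ℤ`). -/
theorem exists_conj_of_finrank_le_two {K : Type*} [Field K] [CharZero K] {c : K}
    (hint : IsIntegral ℤ c) (hdeg : Module.finrank ℚ ℚ⟮c⟯ ≤ 2) :
    ∃ (s p : ℤ) (c' : K), aeval c' (minpoly ℚ c) = 0 ∧ c + c' = s ∧ c * c' = p := by
  have hmap : minpoly ℚ c = (minpoly ℤ c).map (algebraMap ℤ ℚ) :=
    minpoly.isIntegrallyClosed_eq_field_fractions' ℚ hint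
  have hd : (minpoly ℤ c).natDegree = Module.finrank ℚ ℚ⟮c⟯ := by
    rw [adjoin.finrank hint.tower_top, hmap, (minpoly.monic hint).natDegree_map]
  have hpos := minpoly.natDegree_pos hint
  have hroot := minpoly.aeval ℤ c
  obtain h1 | h2 : (minpoly ℤ c).natDegree = 1 ∨ (minpoly ℤ c).natDegree = 2 := by omega
  · obtain ⟨r, hr⟩ := isMonicOfDegree_one_iff.1 ⟨h1, minpoly.monic hint⟩
    rw [hr] at hroot
    simp only [map_add, aeval_X, eq_intCast, map_intCast] at hroot
    exact ⟨-2 * r, r ^ 2, c, minpoly.aeval ℚ c, by push_cast; linear_combination 2 * hroot,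
      by push_cast; linear_combination (c - r) * hroot⟩
  · obtain ⟨s, p, hsp⟩ := isMonicOfDegree_two_iff'.1 ⟨h2, minpoly.monic hint⟩
    rw [hsp] at hroot
    simp only [map_add, map_sub, map_mul, map_pow, aeval_X, eq_intCast, map_intCast] at hroot
    refine ⟨s, p, s - c, ?_, by ring, by linear_combination -hroot⟩
    rw [hmap, aeval_map_algebraMap, hsp]
    simp only [map_add, map_sub, map_mul, map_pow, aeval_X, eq_intCast, map_intCast]
    linear_combination hroot

end Integrality

section TraceNorm

/-- `(u, v) ↦ (u', v')` with `(u + v c) ^ 2 + c = u' + v' c` whenever `c ^ 2 = s c - p`. -/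
def traceNormStep (s p : ℤ) (x : ℤ × ℤ) : ℤ × ℤ :=
  (x.1 ^ 2 - p * x.2 ^ 2, 2 * x.1 * x.2 + s * x.2 ^ 2 + 1)

/-- `2 u + s v` and `u ^ 2 + s u v + p v ^ 2` are the trace and norm of `u + v c` when `c` has
trace `s` and norm `p`. -/
def TraceNormBounded (s p : ℤ) (x : ℤ × ℤ) : Prop :=
  |2 * x.1 + s * x.2| ≤ 4 ∧ |x.1 ^ 2 + s * x.1 * x.2 + p * x.2 ^ 2| ≤ 4

instance (s p : ℤ) (x : ℤ × ℤ) : Decidable (TraceNormBounded s p x) :=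
  inferInstanceAs (Decidable (_ ∧ _))

/-- `X ^ 2 - s X + p` is `X ^ 2 + 1` or `(X - r) (X - r')` with `r, r' ∈ {0, -1, -2}`. -/
def IsPCFTraceNorm (s p : ℤ) : Prop :=
  (s = 0 ∧ p = 1) ∨ ∃ r ∈ ({0, -1, -2} : Finset ℤ), ∃ r' ∈ ({0, -1, -2} : Finset ℤ),
    s = r + r' ∧ p = r * r'

instance (s p : ℤ) : Decidable (IsPCFTraceNorm s p) :=
  inferInstanceAs (Decidable (_ ∨ _))

theorem iterate_eq_traceNormStep {R : Type*} [CommRing R] {c : R} {s p : ℤ}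
    (hc : c ^ 2 = s * c - p) (k : ℕ) :
    (quadMap c)^[k] 0 =
      ((traceNormStep s p)^[k] (0, 0)).1 + ((traceNormStep s p)^[k] (0, 0)).2 * c := by
  have : Function.Semiconj (fun x : ℤ × ℤ => (x.1 : R) + x.2 * c) (traceNormStep s p)
      (quadMap c) := by
    rintro ⟨u, v⟩
    simp only [traceNormStep, quadMap]
    push_cast
    linear_combination (-(v : R) ^ 2) * hc
  simpa using (this.iterate_right k (0, 0)).symm

theorem abs_le_of_norm_intCast_le {t B : ℤ} (h : ‖(t : ℂ)‖ ≤ B) : |t| ≤ B := by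
  rw [Complex.norm_intCast] at h
  exact_mod_cast h

theorem traceNormBounded_of_norm_le {c c' : ℂ} {s p : ℤ} (hs : c + c' = s) (hp : c * c' = p)
    (x : ℤ × ℤ) (h : ‖(x.1 : ℂ) + x.2 * c‖ ≤ 2) (h' : ‖(x.1 : ℂ) + x.2 * c'‖ ≤ 2) :
    TraceNormBounded s p x := by
  constructor <;> apply abs_le_of_norm_intCast_le
  · calc ‖((2 * x.1 + s * x.2 : ℤ) : ℂ)‖ = ‖(x.1 + x.2 * c) + (x.1 + x.2 * c')‖ := by
          push_cast; rw [← hs]; ring_nf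
      _ ≤ 4 := (norm_add_le _ _).trans (by linarith)
  · calc ‖((x.1 ^ 2 + s * x.1 * x.2 + p * x.2 ^ 2 : ℤ) : ℂ)‖
          = ‖(x.1 + x.2 * c) * (x.1 + x.2 * c')‖ := by
          push_cast; rw [← hs, ← hp]; ring_nf
      _ ≤ 4 := by rw [norm_mul]; nlinarith [norm_nonneg ((x.1 : ℂ) + x.2 * c)]

theorem isPCFTraceNorm_of_forall_traceNormBounded (s p : ℤ)
    (h : ∀ k ≤ 5, TraceNormBounded s p ((traceNormStep s p)^[k] (0, 0))) :
    IsPCFTraceNorm s p := by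
  have key : ∀ s ∈ Finset.Icc (-4 : ℤ) 4, ∀ p ∈ Finset.Icc (-4 : ℤ) 4,
      (∀ k ≤ 5, TraceNormBounded s p ((traceNormStep s p)^[k] (0, 0))) →
      IsPCFTraceNorm s p := by
    decide
  obtain ⟨hs, hp⟩ : |s| ≤ 4 ∧ |p| ≤ 4 := by
    simpa [TraceNormBounded, traceNormStep] using h 1 (by norm_num)
  exact key s (Finset.mem_Icc.2 (abs_le.1 hs)) p (Finset.mem_Icc.2 (abs_le.1 hp)) h

theorem eq_of_sq_eq_of_isPCFTraceNorm {c : ℂ} {s p : ℤ} (hc : c ^ 2 = s * c - p)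
    (h : IsPCFTraceNorm s p) :
    c = 0 ∨ c = -1 ∨ c = -2 ∨ c = Complex.I ∨ c = -Complex.I := by
  rcases h with ⟨rfl, rfl⟩ | ⟨r, hr, r', hr', rfl, rfl⟩
  · have : (c - Complex.I) * (c + Complex.I) = 0 := by
      push_cast at hc
      linear_combination hc - Complex.I_sq
    rcases mul_eq_zero.1 this with h | h
    · exact Or.inr <| Or.inr <| Or.inr <| Or.inl <| sub_eq_zero.1 h
    · exact Or.inr <| Or.inr <| Or.inr <| Or.inr <| eq_neg_of_add_eq_zero_left h
  · have root : ∀ t ∈ ({0, -1, -2} : Finset ℤ), c - t = 0 → c = 0 ∨ c = -1 ∨ c = -2 := by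
      intro t ht hct
      rw [sub_eq_zero.1 hct]
      simp only [Finset.mem_insert, Finset.mem_singleton] at ht
      rcases ht with rfl | rfl | rfl <;> norm_num
    have : (c - r) * (c - r') = 0 := by
      push_cast at hc
      linear_combination hc
    rcases mul_eq_zero.1 this with h | h
    · exact (root r hr h).elim Or.inl fun h => Or.inr (h.imp_right Or.inl)
    · exact (root r' hr' h).elim Or.inl fun h => Or.inr (h.imp_right Or.inl)

end TraceNorm

theorem pcf_quadratic_classification_general (c : ℂ)
    (hdeg : Module.finrank ℚ ℚ⟮c⟯ ≤ 2)
    (hpcf : ∃ m n : ℕ, m < n ∧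
      (fun z : ℂ => z ^ 2 + c)^[m] 0 = (fun z : ℂ => z ^ 2 + c)^[n] 0) :
    c = 0 ∨ c = -1 ∨ c = -2 ∨ c = Complex.I ∨ c = -Complex.I := by
  obtain ⟨m, n, hmn, h⟩ := hpcf
  obtain ⟨s, p, c', hc', hs, hp⟩ :=
    exists_conj_of_finrank_le_two (isIntegral_of_iterate_eq hmn h) hdeg
  have h' := iterate_eq_of_aeval_minpoly_eq_zero h hc'
  have hsq : c ^ 2 = s * c - p := by linear_combination c * hs - hp
  have hsq' : c' ^ 2 = s * c' - p := by linear_combination c' * hs - hp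
  refine eq_of_sq_eq_of_isPCFTraceNorm hsq
    (isPCFTraceNorm_of_forall_traceNormBounded s p fun k _ => ?_)
  refine traceNormBounded_of_norm_le hs hp _ ?_ ?_
  · rw [← iterate_eq_traceNormStep hsq]
    exact norm_iterate_le_two_of_iterate_eq hmn h k
  · rw [← iterate_eq_traceNormStep hsq']
    exact norm_iterate_le_two_of_iterate_eq hmn h' k

/-- If `c` is an algebraic number of degree at most 2 over `ℚ` and the quadratic map
`f_c(z) = z² + c` is postcritically finite (i.e. `0` is preperiodic for `f_c`), then
`c ∈ {0, -1, -2, i, -i}`. -/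
theorem pcf_quadratic_classification (c : ℂ) (halg : IsAlgebraic ℚ c)
    (hdeg : Module.finrank ℚ ℚ⟮c⟯ ≤ 2)
    (hpcf : ∃ m n : ℕ, m < n ∧
      (fun z : ℂ => z ^ 2 + c)^[m] 0 = (fun z : ℂ => z ^ 2 + c)^[n] 0) :
    c = 0 ∨ c = -1 ∨ c = -2 ∨ c = Complex.I ∨ c = -Complex.I :=
  pcf_quadratic_classification_general c hdeg hpcf
end

section
/- Let K be a quadratic field and let c ∈ K be such that the map f_c(z) = z² + c has exactly one fixed point in K. Then c = 1/4, and the set of preperiodic points of f_{1/4} in K equals the intersection of K with the eight-element set {1/2, −1/2, (i√3)/2, −(i√3)/2, 1/2 + i, 1/2 − i, −1/2 + i, −1/2 − i}. -/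
/-!
Two fixed points `x` and `1 - x` of `z ↦ z² + c` must coincide, so `x = 1/2` and `c = 1/4`.
Translating by `1/2` conjugates `f_{1/4}` to `g(w) = w² + w`, a monic integer polynomial, so a
preperiodic `w ∈ K` is an algebraic integer and its trace and norm `(t, n)` lie in `ℤ`. Both complex
embeddings of every point of the orbit are preperiodic for `g`, hence of absolute value at most `2`,
so the pairs `(t, n)` along the orbit, which evolve by `(t, n) ↦ (t² + t - 2n, n(n + t + 1))`, stay
in `[-4, 4]²`. A finite search leaves six pairs, and the roots of the six quadratics
`X² - tX + n`, shifted by `1/2`, are the eight listed points, which form an `f_{1/4}`-invariant set.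
-/

open Polynomial Module

namespace Function

def IsPreperiodicPt {α : Type*} (f : α → α) (x : α) : Prop :=
  ∃ m n : ℕ, m < n ∧ f^[m] x = f^[n] x

variable {α β : Type*} {f : α → α} {g : β → β} {x : α}

theorem IsPreperiodicPt.iterate (hx : IsPreperiodicPt f x) (k : ℕ) :
    IsPreperiodicPt f (f^[k] x) := by
  obtain ⟨m, n, hmn, h⟩ := hx
  refine ⟨m, n, hmn, ?_⟩
  rw [← iterate_add_apply, add_comm, iterate_add_apply, h, ← iterate_add_apply, add_comm,
    iterate_add_apply]

theorem Semiconj.isPreperiodicPt {φ : α → β} (h : Semiconj φ f g) (hx : IsPreperiodicPt f x) :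
    IsPreperiodicPt g (φ x) := by
  obtain ⟨m, n, hmn, hx⟩ := hx
  exact ⟨m, n, hmn, by rw [← (h.iterate_right m).eq, ← (h.iterate_right n).eq, hx]⟩

theorem Semiconj.isPreperiodicPt_iff {φ : α → β} (h : Semiconj φ f g) (hφ : Injective φ) :
    IsPreperiodicPt g (φ x) ↔ IsPreperiodicPt f x := by
  refine ⟨fun ⟨m, n, hmn, hx⟩ => ⟨m, n, hmn, hφ ?_⟩, h.isPreperiodicPt⟩
  rwa [(h.iterate_right m).eq, (h.iterate_right n).eq]

theorem _root_.Set.Finite.isPreperiodicPt_of_mapsTo {s : Set α} (hs : s.Finite)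
    (hf : Set.MapsTo f s s) (hx : x ∈ s) : IsPreperiodicPt f x := by
  have := hs.to_subtype
  obtain ⟨m, n, hne, h⟩ := Finite.exists_ne_map_eq_of_infinite
    fun k : ℕ => (⟨f^[k] x, hf.iterate k hx⟩ : s)
  rcases hne.lt_or_gt with hmn | hnm
  · exact ⟨m, n, hmn, congrArg Subtype.val h⟩
  · exact ⟨n, m, hnm, congrArg Subtype.val h.symm⟩

end Function

open Function

theorem Polynomial.IsMonicOfDegree.iterate_comp {R : Type*} [Semiring R] [Nontrivial R]
    {p : R[X]} {d : ℕ} (hp : IsMonicOfDegree p d) (hd : d ≠ 0) (k : ℕ) :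
    IsMonicOfDegree (p.comp^[k] X) (d ^ k) := by
  induction k with
  | zero => simpa using isMonicOfDegree_X R
  | succ k ih =>
    rw [iterate_succ_apply', pow_succ']
    exact hp.comp (pow_ne_zero k hd) ih

theorem Function.IsPreperiodicPt.isIntegral {R A : Type*} [CommRing R] [CommRing A]
    [Algebra R A] {p : R[X]} {d : ℕ} (hp : IsMonicOfDegree p d) (hd : 1 < d) {x : A}
    (hx : IsPreperiodicPt (fun y => aeval y p) x) : IsIntegral R x := by
  nontriviality R
  obtain ⟨m, n, hmn, h⟩ := hx
  have hiter := hp.iterate_comp (by omega)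
  refine ⟨p.comp^[n] X - p.comp^[m] X, ((hiter n).sub ?_).monic, ?_⟩
  · rw [(hiter m).natDegree_eq]
    exact Nat.pow_lt_pow_right hd hmn
  · simp only [eval₂_sub, iterate_comp_eval₂, eval₂_X, ← aeval_def]
    exact sub_eq_zero.mpr h.symm

theorem norm_lt_norm_sq_add_self {𝕜 : Type*} [NormedDivisionRing 𝕜] {z : 𝕜} (hz : 2 < ‖z‖) :
    ‖z‖ < ‖z ^ 2 + z‖ := by
  have h := norm_sub_norm_le (z ^ 2) (-z)
  rw [sub_neg_eq_add, norm_neg, norm_pow] at h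
  nlinarith

theorem Function.IsPreperiodicPt.norm_le_two {𝕜 : Type*} [NormedDivisionRing 𝕜] {z : 𝕜}
    (hz : IsPreperiodicPt (fun z : 𝕜 => z ^ 2 + z) z) : ‖z‖ ≤ 2 := by
  by_contra! hz2
  have escape : ∀ k, 2 < ‖(fun z : 𝕜 => z ^ 2 + z)^[k] z‖ := by
    intro k
    induction k with
    | zero => exact hz2
    | succ k ih => rw [iterate_succ_apply']; exact ih.trans (norm_lt_norm_sq_add_self ih)
  have mono : StrictMono fun k => ‖(fun z : 𝕜 => z ^ 2 + z)^[k] z‖ :=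
    strictMono_nat_of_lt_succ fun k => by
      rw [iterate_succ_apply']; exact norm_lt_norm_sq_add_self (escape k)
  obtain ⟨m, n, hmn, h⟩ := hz
  exact (mono hmn).ne (congrArg norm h)

theorem eq_one_div_four_of_existsUnique_fixed {F : Type*} [Field F] {c : F}
    (h : ∃! x : F, x ^ 2 + c = x) : c = 1 / 4 := by
  obtain ⟨x, hx, huniq⟩ := h
  have h2x : 2 * x = 1 := by linear_combination -huniq (1 - x) (by linear_combination hx)
  have h4c : 4 * c = 1 := by linear_combination 4 * hx - (2 * x - 1) * h2x
  exact eq_one_div_of_mul_eq_one_right h4c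

theorem semiconj_sub_half {F : Type*} [Field F] [NeZero (2 : F)] :
    Semiconj (fun z : F => z - 1 / 2) (fun z => z ^ 2 + 1 / 4) (fun z => z ^ 2 + z) := fun z => by
  linear_combination
    z * mul_one_div_cancel (two_ne_zero' F) - (by norm_num : (1 / 2 : F) ^ 2 = 1 / 4)

theorem exists_conj_algHom {K L E : Type*} [Field K] [Field L] [Field E] [Algebra K L]
    [Algebra K E] [IsAlgClosed E] [Algebra.IsSeparable K L] (hL : finrank K L = 2)
    (ι : L →ₐ[K] E) :
    ∃ σ : L →ₐ[K] E, ∀ u : L, algebraMap K E (Algebra.trace K L u) = ι u + σ u ∧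
      algebraMap K E (Algebra.norm K u) = ι u * σ u := by
  classical
  have : FiniteDimensional K L := Module.finite_of_finrank_eq_succ hL
  have hcard : Fintype.card (L →ₐ[K] E) = 2 := by rw [AlgHom.card, hL]
  obtain ⟨σ, hσ⟩ := Fintype.exists_ne_of_one_lt_card (by omega) ι
  have huniv : (Finset.univ : Finset (L →ₐ[K] E)) = {ι, σ} :=
    (Finset.eq_univ_of_card _ (by rw [Finset.card_pair hσ.symm, hcard])).symm
  refine ⟨σ, fun u => ⟨?_, ?_⟩⟩
  · rw [trace_eq_sum_embeddings, huniv, Finset.sum_pair hσ.symm]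
  · rw [Algebra.norm_eq_prod_embeddings, huniv, Finset.prod_pair hσ.symm]

theorem exists_int_trace_norm {L : Type*} [Field L] [Algebra ℚ L] [FiniteDimensional ℚ L]
    {u : L} (hu : IsIntegral ℤ u) :
    ∃ t n : ℤ, Algebra.trace ℚ L u = t ∧ Algebra.norm ℚ u = n := by
  obtain ⟨t, ht⟩ := IsIntegrallyClosed.isIntegral_iff.mp (Algebra.isIntegral_trace (L := ℚ) hu)
  obtain ⟨n, hn⟩ := IsIntegrallyClosed.isIntegral_iff.mp (Algebra.isIntegral_norm ℚ hu)
  exact ⟨t, n, by simp [← ht], by simp [← hn]⟩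

def IsSumProd {R : Type*} [Ring R] (p : ℤ × ℤ) (u v : R) : Prop :=
  (p.1 : R) = u + v ∧ (p.2 : R) = u * v

def sumProdStep (p : ℤ × ℤ) : ℤ × ℤ := (p.1 ^ 2 + p.1 - 2 * p.2, p.2 * (p.2 + p.1 + 1))

namespace IsSumProd

variable {R : Type*} [CommRing R] {p : ℤ × ℤ} {u v : R}

theorem step (h : IsSumProd p u v) : IsSumProd (sumProdStep p) (u ^ 2 + u) (v ^ 2 + v) := by
  obtain ⟨h1, h2⟩ := h
  constructor <;> simp only [sumProdStep] <;> push_cast <;> rw [h1, h2] <;> ring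

theorem iterate_step (h : IsSumProd p u v) (k : ℕ) :
    IsSumProd (sumProdStep^[k] p) ((fun z : R => z ^ 2 + z)^[k] u)
      ((fun z : R => z ^ 2 + z)^[k] v) := by
  induction k with
  | zero => exact h
  | succ k ih => simp only [iterate_succ_apply']; exact ih.step

theorem mem_Icc {u v : ℂ} (h : IsSumProd p u v) (hu : ‖u‖ ≤ 2) (hv : ‖v‖ ≤ 2) :
    p ∈ Finset.Icc ((-4, -4) : ℤ × ℤ) (4, 4) := by
  have h1 : ‖(p.1 : ℂ)‖ ≤ 4 := by
    rw [h.1]; exact (norm_add_le u v).trans (by linarith)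
  have h2 : ‖(p.2 : ℂ)‖ ≤ 4 := by
    rw [h.2, norm_mul]; nlinarith [norm_nonneg u, norm_nonneg v]
  rw [Complex.norm_intCast, ← Int.cast_abs] at h1 h2
  have h1 : |p.1| ≤ 4 := by exact_mod_cast h1
  have h2 : |p.2| ≤ 4 := by exact_mod_cast h2
  rw [abs_le] at h1 h2
  simp only [Finset.mem_Icc, Prod.le_def]
  omega

end IsSumProd

theorem mem_of_sumProdStep_iterate_mem_Icc : ∀ p ∈ Finset.Icc ((-4, -4) : ℤ × ℤ) (4, 4),
    (∀ k ∈ Finset.Icc 1 3, sumProdStep^[k] p ∈ Finset.Icc ((-4, -4) : ℤ × ℤ) (4, 4)) →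
    p ∈ ({(0, 0), (-1, 0), (-2, 1), (-1, 1), (0, 1), (-2, 2)} : Finset (ℤ × ℤ)) := by
  decide

theorem Function.IsPreperiodicPt.exists_isSumProd {L : Type*} [Field L] [Algebra ℚ L]
    (hL : finrank ℚ L = 2) (ι : L →ₐ[ℚ] ℂ) {w : L}
    (hw : IsPreperiodicPt (fun z : L => z ^ 2 + z) w) :
    ∃ (σ : L →ₐ[ℚ] ℂ) (p : ℤ × ℤ), IsSumProd p (ι w) (σ w) := by
  have : FiniteDimensional ℚ L := Module.finite_of_finrank_eq_succ hL
  have hmonic : IsMonicOfDegree (X ^ 2 + X : ℤ[X]) 2 :=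
    (isMonicOfDegree_X_pow ℤ 2).add_right (by simp)
  have hint : IsIntegral ℤ w := IsPreperiodicPt.isIntegral hmonic one_lt_two (by simpa using hw)
  obtain ⟨σ, hσ⟩ := exists_conj_algHom hL ι
  obtain ⟨t, n, ht, hn⟩ := exists_int_trace_norm hint
  refine ⟨σ, (t, n), ?_, ?_⟩
  · simpa [ht] using (hσ w).1
  · simpa [hn] using (hσ w).2

def quarterPreperiodicSet : Set ℂ :=
  {1 / 2, -(1 / 2),
    Complex.I * Real.sqrt 3 / 2, -(Complex.I * Real.sqrt 3 / 2),
    1 / 2 + Complex.I, 1 / 2 - Complex.I,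
    -(1 / 2) + Complex.I, -(1 / 2) - Complex.I}

theorem ofReal_sqrt_three_sq : ((Real.sqrt 3 : ℝ) : ℂ) ^ 2 = 3 := by
  norm_cast; simp

-- `±i√3/2 ↦ -1/2 ↦ 1/2 ↦ 1/2`, `1/2 ± i ↦ -1/2 ± i`, and `-1/2 + i ↔ -1/2 - i` is a 2-cycle.
theorem mapsTo_quarterPreperiodicSet :
    Set.MapsTo (fun z : ℂ => z ^ 2 + 1 / 4) quarterPreperiodicSet quarterPreperiodicSet := by
  have hI := Complex.I_sq
  have h3 := ofReal_sqrt_three_sq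
  simp only [Set.MapsTo, quarterPreperiodicSet, Set.mem_insert_iff, Set.mem_singleton_iff]
  rintro z (rfl | rfl | rfl | rfl | rfl | rfl | rfl | rfl)
  · exact .inl (by ring)
  · exact .inl (by ring)
  · exact .inr <| .inl <| by linear_combination (√3 ^ 2 / 4 : ℂ) * hI - h3 / 4
  · exact .inr <| .inl <| by linear_combination (√3 ^ 2 / 4 : ℂ) * hI - h3 / 4
  · exact .inr <| .inr <| .inr <| .inr <| .inr <| .inr <| .inl <| by linear_combination hI
  · exact .inr <| .inr <| .inr <| .inr <| .inr <| .inr <| .inr <| by linear_combination hI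
  · exact .inr <| .inr <| .inr <| .inr <| .inr <| .inr <| .inr <| by linear_combination hI
  · exact .inr <| .inr <| .inr <| .inr <| .inr <| .inr <| .inl <| by linear_combination hI

theorem mem_quarterPreperiodicSet_of_root {p : ℤ × ℤ}
    (hp : p ∈ ({(0, 0), (-1, 0), (-2, 1), (-1, 1), (0, 1), (-2, 2)} : Finset (ℤ × ℤ)))
    {x : ℂ} (hx : (x - 1 / 2) ^ 2 - p.1 * (x - 1 / 2) + p.2 = 0) :
    x ∈ quarterPreperiodicSet := by
  suffices ∃ s ∈ quarterPreperiodicSet, ∃ t ∈ quarterPreperiodicSet, (x - s) * (x - t) = 0 by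
    obtain ⟨s, hs, t, ht, h⟩ := this
    rcases mul_eq_zero.mp h with h | h <;> rw [sub_eq_zero] at h <;> rwa [h]
  have hI := Complex.I_sq
  have h3 := ofReal_sqrt_three_sq
  simp only [Finset.mem_insert, Finset.mem_singleton] at hp
  rcases hp with rfl | rfl | rfl | rfl | rfl | rfl <;> push_cast at hx
  · refine ⟨1 / 2, ?_, 1 / 2, ?_, by linear_combination hx⟩ <;> simp [quarterPreperiodicSet]
  · refine ⟨1 / 2, ?_, -(1 / 2), ?_, by linear_combination hx⟩ <;> simp [quarterPreperiodicSet]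
  · refine ⟨-(1 / 2), ?_, -(1 / 2), ?_, by linear_combination hx⟩ <;>
      simp [quarterPreperiodicSet]
  · refine ⟨Complex.I * √3 / 2, ?_, -(Complex.I * √3 / 2), ?_,
      by linear_combination hx - (√3 ^ 2 / 4 : ℂ) * hI + h3 / 4⟩ <;> simp [quarterPreperiodicSet]
  · refine ⟨1 / 2 + Complex.I, ?_, 1 / 2 - Complex.I, ?_, by linear_combination hx - hI⟩ <;>
      simp [quarterPreperiodicSet]
  · refine ⟨-(1 / 2) + Complex.I, ?_, -(1 / 2) - Complex.I, ?_, by linear_combination hx - hI⟩ <;>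
      simp [quarterPreperiodicSet]

theorem Function.IsPreperiodicPt.add_half_mem_quarterPreperiodicSet {L : Type*} [Field L]
    [Algebra ℚ L] (hL : finrank ℚ L = 2) (ι : L →ₐ[ℚ] ℂ) {w : L}
    (hw : IsPreperiodicPt (fun z : L => z ^ 2 + z) w) :
    ι w + 1 / 2 ∈ quarterPreperiodicSet := by
  obtain ⟨σ, p, hp⟩ := hw.exists_isSumProd hL ι
  have hpre (ψ : L →ₐ[ℚ] ℂ) : IsPreperiodicPt (fun z : ℂ => z ^ 2 + z) (ψ w) :=
    Semiconj.isPreperiodicPt (fun z => by simp) hw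
  have hbox (k : ℕ) := (hp.iterate_step k).mem_Icc ((hpre ι).iterate k).norm_le_two
    ((hpre σ).iterate k).norm_le_two
  refine mem_quarterPreperiodicSet_of_root
    (mem_of_sumProdStep_iterate_mem_Icc p (hbox 0) fun k _ => hbox k) ?_
  rw [add_sub_cancel_right, hp.1, hp.2]
  ring

/-- If `K` is a quadratic field and `c ∈ K` is such that `f_c(z) = z² + c` has exactly one
fixed point in `K`, then `c = 1/4` and the set of `K`-rational preperiodic points of
`f_{1/4}` is the intersection of `K` with the eight-element set
`{±1/2, ±i√3/2, ±1/2 ± i}`. -/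
theorem unique_fixed_point_classification (K : IntermediateField ℚ ℂ)
    (hK : Module.finrank ℚ K = 2) (c : K)
    (hfix : ∃! x : K, x ^ 2 + c = x) :
    c = 1 / 4 ∧
      ∀ x : K,
        (∃ m n : ℕ, m < n ∧
            (fun z : K => z ^ 2 + 1 / 4)^[m] x = (fun z : K => z ^ 2 + 1 / 4)^[n] x) ↔
          (x : ℂ) ∈ ({1 / 2, -(1 / 2),
            Complex.I * Real.sqrt 3 / 2, -(Complex.I * Real.sqrt 3 / 2),
            1 / 2 + Complex.I, 1 / 2 - Complex.I,
            -(1 / 2) + Complex.I, -(1 / 2) - Complex.I} : Set ℂ) := by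
  refine ⟨eq_one_div_four_of_existsUnique_fixed hfix, fun x => ?_⟩
  change IsPreperiodicPt _ x ↔ (x : ℂ) ∈ quarterPreperiodicSet
  refine ⟨fun hx => ?_, fun hx => ?_⟩
  · have hmem : ((x - 1 / 2 : K) : ℂ) + 1 / 2 ∈ quarterPreperiodicSet :=
      (semiconj_sub_half.isPreperiodicPt hx).add_half_mem_quarterPreperiodicSet hK K.val
    have h2 : ((2 : K) : ℂ) = 2 := map_ofNat K.val 2
    simpa [h2] using hmem
  · have hcoe : Semiconj ((↑) : K → ℂ) (fun z => z ^ 2 + 1 / 4) (fun z => z ^ 2 + 1 / 4) :=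
      fun z => by push_cast; rfl
    exact (hcoe.isPreperiodicPt_iff Subtype.val_injective).mp
      ((by simp [quarterPreperiodicSet] : quarterPreperiodicSet.Finite).isPreperiodicPt_of_mapsTo
        mapsTo_quarterPreperiodicSet hx)
end

section
/- The set of squarefree integers d > 1 such that the real quadratic field K = ℚ(√d) contains an element c for which the map f_c(z) = z² + c has a point p ∈ K of exact period 4 with p · f_c(p) · f_c^[2](p) · f_c^[3](p) ≠ 0 is infinite; and likewise the set of squarefree integers d < 0 with the same property for the imaginary quadratic field K = ℚ(√d) is infinite. (Equivalently, for infinitely many real and infinitely many imaginary quadratic fields K there exists c ∈ K such that G(f_c, K) admits a subgraph of type 8(4).) -/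
open IntermediateField


def HasType8_4 (d : ℤ) : Prop :=
  Squarefree d ∧
    ∃ z : ℂ, z ^ 2 = (d : ℂ) ∧
      ∃ c p : ℚ⟮z⟯,
        ((fun w : ℚ⟮z⟯ => w ^ 2 + c)^[4] p = p ∧
          ∀ k : ℕ, 1 ≤ k → k < 4 → (fun w : ℚ⟮z⟯ => w ^ 2 + c)^[k] p ≠ p) ∧
        p * (fun w : ℚ⟮z⟯ => w ^ 2 + c)^[1] p * (fun w : ℚ⟮z⟯ => w ^ 2 + c)^[2] p *
          (fun w : ℚ⟮z⟯ => w ^ 2 + c)^[3] p ≠ 0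

lemma sq_irrat {d : ℤ} (hd : Squarefree d) (hd1 : d ≠ 1) {z : ℂ} (hz : z ^ 2 = (d:ℂ)) (q : ℚ) :
    z ≠ (q : ℂ) := by
  intro h
  have h2 : ((q ^ 2 : ℚ) : ℂ) = ((d : ℚ) : ℂ) := by push_cast; rw [← h, hz]
  have h3 : (q : ℚ) ^ 2 = (d : ℚ) := by exact_mod_cast h2
  have hsq : IsSquare ((d : ℤ) : ℚ) := ⟨q, by rw [← h3]; ring⟩
  obtain ⟨k, hk⟩ := Rat.isSquare_intCast_iff.mp hsq
  have hu : IsUnit k := hd k (by rw [hk])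
  rcases Int.isUnit_iff.mp hu with h1 | h1 <;> subst h1 <;> simp at hk <;> omega

lemma core_ids (X y c : ℂ) (hX0 : X ≠ 0) (hX1 : X ^ 2 - 1 ≠ 0)
    (hc : c * (4*X^2*(1 - X^2)) = X^6 + 4*X^3 - 1)
    (hy : y ^ 2 * (X^2*(X^2 - 1)) = X^4 + 2*X^3 + 2*X - 1) :
    ((X^2 + y^2)/4 + c) * X = -(1/2) ∧
    ((X^2 + y^2)/4 + c)^2 + X^2/4*y^2 + c = X/2 := by
  have hQ : X^2*(X^2-1) ≠ 0 := mul_ne_zero (pow_ne_zero 2 hX0) hX1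
  have hS : 4*X^2*(1-X^2) ≠ 0 := by
    intro h; apply hQ
    have h4 : (4:ℂ) ≠ 0 := by norm_num
    rcases mul_eq_zero.mp h with h' | h'
    · rcases mul_eq_zero.mp h' with h'' | h''
      · exact absurd h'' h4
      · exact mul_eq_zero_of_left h'' _
    · exact mul_eq_zero_of_right _ (by linear_combination -h')
  constructor
  · have key : (X^2*(X^2-1)) * (4*X^2*(1-X^2)) *
        ((((X^2 + y^2)/4 + c) * X) - (-(1/2))) = 0 := by
      linear_combination (-(X^2*(X^2-1))*X) * hy + ((X^2*(X^2-1))*X) * hc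
    rcases mul_eq_zero.mp key with h | h
    · rcases mul_eq_zero.mp h with h' | h'
      · exact absurd h' hQ
      · exact absurd h' hS
    · linear_combination h
  · have key : ((X^2*(X^2-1)) * (4*X^2*(1-X^2)))^2 *
        ((((X^2 + y^2)/4 + c)^2 + X^2/4*y^2 + c) - X/2) = 0 := by
      linear_combination
        ((X^12 - 3*X^10 + 3*X^8 - X^6)*y^2 + (8*X^12 - 24*X^10 + 24*X^8 - 8*X^6)*c +
          (6*X^14 - 17*X^12 + 2*X^11 + 16*X^10 - 2*X^9 - 6*X^8 - 2*X^7 + 2*X^6 + 2*X^5 - X^4)) * hy +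
        ((-4*X^12 + 12*X^10 - 12*X^8 + 4*X^6)*c +
          (-X^14 - 2*X^12 + 11*X^10 - 4*X^9 - 11*X^8 + 8*X^7 + 2*X^6 - 4*X^5 + X^4)) * hc
    rcases mul_eq_zero.mp key with h | h
    · exact absurd (pow_eq_zero_iff (by norm_num)|>.mp h) (mul_ne_zero hQ hS)
    · linear_combination h

lemma construct {d : ℤ} (hd : Squarefree d) (hd1 : d ≠ 1) {z : ℂ} (hz : z ^ 2 = (d:ℂ))
    (x e : ℚ) (hx0 : x ≠ 0) (hx1 : x ^ 2 ≠ 1) (he : e ≠ 0)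
    (hrel : x^4 + 2*x^3 + 2*x - 1 = e^2 * (d:ℚ) * (x^2 * (x^2 - 1))) :
    HasType8_4 d := by
  set Cq : ℚ := (x^6 + 4*x^3 - 1)/(4*x^2*(1 - x^2)) with hCq
  set Aq : ℚ := (x^2 + e^2*(d:ℚ))/4 + Cq with hAq
  set X : ℂ := (x:ℂ) with hXdef
  set y : ℂ := (e:ℂ) * z with hydef
  have hX0 : X ≠ 0 := by rw [hXdef]; exact_mod_cast hx0
  have hX2ne1 : X^2 ≠ 1 := by
    rw [hXdef]; intro h; apply hx1
    exact_mod_cast (by push_cast; exact h : ((x^2 : ℚ):ℂ) = ((1:ℚ):ℂ))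
  have hX1 : X^2 - 1 ≠ 0 := sub_ne_zero.mpr hX2ne1
  have hS : 4*X^2*(1-X^2) ≠ 0 := by
    have : (1:ℂ) - X^2 ≠ 0 := fun h => hX2ne1 (by linear_combination -h)
    exact mul_ne_zero (mul_ne_zero (by norm_num) (pow_ne_zero 2 hX0)) this
  have hy2 : y^2 = (e:ℂ)^2 * (d:ℂ) := by rw [hydef, mul_pow, hz]
  have hrelC : X^4 + 2*X^3 + 2*X - 1 = (e:ℂ)^2 * (d:ℂ) * (X^2 * (X^2 - 1)) := by
    rw [hXdef]; exact_mod_cast hrel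
  have hyQ : y^2 * (X^2*(X^2-1)) = X^4 + 2*X^3 + 2*X - 1 := by
    rw [hy2, hrelC]
  have hCdef : (Cq:ℂ) = (X^6 + 4*X^3 - 1)/(4*X^2*(1-X^2)) := by
    rw [hCq, hXdef]; push_cast; ring
  have hcQ : (Cq:ℂ) * (4*X^2*(1-X^2)) = X^6 + 4*X^3 - 1 := by
    rw [hCdef]; field_simp
  obtain ⟨h1, h2⟩ := core_ids X y (Cq:ℂ) hX0 hX1 hcQ hyQ
  -- orbit step identities in ℂ
  have s1 : ((X+y)/2)^2 + (Cq:ℂ) = ((X^2+y^2)/4 + (Cq:ℂ)) + X/2*y := by ring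
  have s2 : (((X^2+y^2)/4 + (Cq:ℂ)) + X/2*y)^2 + (Cq:ℂ) = (X-y)/2 := by
    linear_combination h2 + y*h1
  have s3 : ((X-y)/2)^2 + (Cq:ℂ) = ((X^2+y^2)/4 + (Cq:ℂ)) - X/2*y := by ring
  have s4 : (((X^2+y^2)/4 + (Cq:ℂ)) - X/2*y)^2 + (Cq:ℂ) = (X+y)/2 := by
    linear_combination h2 - y*h1
  -- memberships
  have hratK : ∀ q : ℚ, (q:ℂ) ∈ ℚ⟮z⟯ := fun q =>
    (eq_ratCast (algebraMap ℚ ℂ) q) ▸ (ℚ⟮z⟯.algebraMap_mem q)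
  have hzK : z ∈ ℚ⟮z⟯ := mem_adjoin_simple_self ℚ z
  have hyK : y ∈ ℚ⟮z⟯ := by rw [hydef]; exact mul_mem (hratK e) hzK
  have h2K : (2:ℂ) ∈ ℚ⟮z⟯ := by simpa using hratK 2
  have h4K : (4:ℂ) ∈ ℚ⟮z⟯ := by simpa using hratK 4
  have hXK : X ∈ ℚ⟮z⟯ := by rw [hXdef]; exact hratK x
  have hAmem : (X^2+y^2)/4 + (Cq:ℂ) ∈ ℚ⟮z⟯ :=
    add_mem (div_mem (add_mem (pow_mem hXK 2) (pow_mem hyK 2)) h4K) (hratK Cq)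
  have hXy2 : X/2*y ∈ ℚ⟮z⟯ := mul_mem (div_mem hXK h2K) hyK
  set cK : ℚ⟮z⟯ := ⟨(Cq:ℂ), hratK Cq⟩ with hcK
  set p1K : ℚ⟮z⟯ := ⟨(X+y)/2, div_mem (add_mem hXK hyK) h2K⟩ with hp1K
  set p2K : ℚ⟮z⟯ := ⟨((X^2+y^2)/4 + (Cq:ℂ)) + X/2*y, add_mem hAmem hXy2⟩ with hp2K
  set p3K : ℚ⟮z⟯ := ⟨(X-y)/2, div_mem (sub_mem hXK hyK) h2K⟩ with hp3K
  set p4K : ℚ⟮z⟯ := ⟨((X^2+y^2)/4 + (Cq:ℂ)) - X/2*y, sub_mem hAmem hXy2⟩ with hp4K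
  set F : ℚ⟮z⟯ → ℚ⟮z⟯ := fun w => w^2 + cK with hF
  have step : ∀ aK bK : ℚ⟮z⟯, ((aK:ℂ)^2 + (Cq:ℂ) = (bK:ℂ)) → F aK = bK := by
    intro aK bK hab
    apply Subtype.ext
    push_cast
    exact hab
  have e1 : F p1K = p2K := step _ _ s1
  have e2 : F p2K = p3K := step _ _ s2
  have e3 : F p3K = p4K := step _ _ s3
  have e4 : F p4K = p1K := step _ _ s4
  have i1 : F^[1] p1K = p2K := by rw [Function.iterate_one]; exact e1
  have i2 : F^[2] p1K = p3K := by
    rw [show (2:ℕ) = 1+1 from rfl, Function.iterate_succ_apply', i1]; exact e2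
  have i3 : F^[3] p1K = p4K := by
    rw [show (3:ℕ) = 2+1 from rfl, Function.iterate_succ_apply', i2]; exact e3
  have i4 : F^[4] p1K = p1K := by
    rw [show (4:ℕ) = 3+1 from rfl, Function.iterate_succ_apply', i3]; exact e4
  -- irrationality tools
  have hzirr := sq_irrat hd hd1 hz
  have hlin : ∀ u v : ℚ, v ≠ 0 → (u:ℂ) + (v:ℂ)*y ≠ 0 := by
    intro u v hv h
    have hvC : (v:ℂ) ≠ 0 := by exact_mod_cast hv
    have heC : (e:ℂ) ≠ 0 := by exact_mod_cast he
    rw [hydef] at h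
    refine hzirr (-u/(v*e)) ?_
    have hcast : ((-u/(v*e) : ℚ) : ℂ) = (-(u:ℂ))/((v:ℂ)*(e:ℂ)) := by push_cast; ring
    rw [hcast, eq_div_iff (mul_ne_zero hvC heC)]
    linear_combination h
  have hAcast : ((Aq:ℚ):ℂ) = (X^2+y^2)/4 + (Cq:ℂ) := by
    rw [hAq]; push_cast; rw [hy2]
  have hxne1 : x ≠ 1 := fun h => hx1 (by rw [h]; norm_num)
  have hxnem1 : x ≠ -1 := fun h => hx1 (by rw [h]; norm_num)
  have hgen : ∀ (u v : ℚ) (a b : ℂ), v ≠ 0 → a - b = (u:ℂ) + (v:ℂ)*y → a ≠ b := by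
    intro u v a b hv hab h
    exact hlin u v hv (by rw [← hab, h, sub_self])
  have hne21 : ((p2K:ℂ)) ≠ (p1K:ℂ) := by
    apply hgen (Aq - x/2) ((x-1)/2) _ _
      (div_ne_zero (sub_ne_zero.mpr hxne1) two_ne_zero)
    rw [hp2K, hp1K]
    show (((X^2+y^2)/4 + (Cq:ℂ)) + X/2*y) - (X+y)/2 = _
    rw [← hAcast, hXdef]; push_cast; ring
  have hne31 : ((p3K:ℂ)) ≠ (p1K:ℂ) := by
    apply hgen 0 (-1) _ _ (by norm_num)
    show (X-y)/2 - (X+y)/2 = _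
    push_cast; ring
  have hne41 : ((p4K:ℂ)) ≠ (p1K:ℂ) := by
    apply hgen (Aq - x/2) (-(x+1)/2) _ _
      (div_ne_zero (neg_ne_zero.mpr (by intro h; exact hxnem1 (by linarith [h] ))) two_ne_zero)
    show (((X^2+y^2)/4 + (Cq:ℂ)) - X/2*y) - (X+y)/2 = _
    rw [← hAcast, hXdef]; push_cast; ring
  have hnz1 : ((p1K:ℂ)) ≠ 0 := by
    apply hgen (x/2) (1/2) _ _ (by norm_num)
    show (X+y)/2 - 0 = _
    rw [hXdef]; push_cast; ring
  have hnz2 : ((p2K:ℂ)) ≠ 0 := by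
    apply hgen Aq (x/2) _ _ (div_ne_zero hx0 two_ne_zero)
    show (((X^2+y^2)/4 + (Cq:ℂ)) + X/2*y) - 0 = _
    rw [← hAcast, hXdef]; push_cast; ring
  have hnz3 : ((p3K:ℂ)) ≠ 0 := by
    apply hgen (x/2) (-1/2) _ _ (by norm_num)
    show (X-y)/2 - 0 = _
    rw [hXdef]; push_cast; ring
  have hnz4 : ((p4K:ℂ)) ≠ 0 := by
    apply hgen Aq (-x/2) _ _
      (div_ne_zero (neg_ne_zero.mpr hx0) two_ne_zero)
    show (((X^2+y^2)/4 + (Cq:ℂ)) - X/2*y) - 0 = _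
    rw [← hAcast, hXdef]; push_cast; ring
  have coe_ne : ∀ aK bK : ℚ⟮z⟯, ((aK:ℂ)) ≠ ((bK:ℂ)) → aK ≠ bK :=
    fun aK bK h hab => h (by rw [hab])
  have coe_nz : ∀ aK : ℚ⟮z⟯, ((aK:ℂ)) ≠ 0 → aK ≠ 0 := by
    intro aK h hab
    exact h (by rw [hab]; norm_cast)
  refine ⟨hd, z, hz, cK, p1K, ⟨i4, ?_⟩, ?_⟩
  · intro k hk1 hk4
    interval_cases k
    · rw [i1]; exact coe_ne _ _ hne21
    · rw [i2]; exact coe_ne _ _ hne31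
    · rw [i3]; exact coe_ne _ _ hne41
  · rw [i1, i2, i3]
    exact mul_ne_zero (mul_ne_zero (mul_ne_zero (coe_nz _ hnz1) (coe_nz _ hnz2))
      (coe_nz _ hnz3)) (coe_nz _ hnz4)

lemma prep (b : ℕ) (hb : 2 ≤ b) (hP : Nat.Prime (2*b+1)) (A : ℤ) (hA0 : 0 < A)
    (hPA : ¬ (2*(b:ℤ)+1) ∣ A) :
    ∃ a m : ℕ, A * (2*(b:ℤ)+1) = (m:ℤ)^2*(a:ℤ) ∧ Squarefree (a:ℤ) ∧
      (2*(b:ℤ)+1) ∣ (a:ℤ) ∧ 1 < (a:ℤ) ∧ m ≠ 0 := by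
  set P : ℤ := 2*(b:ℤ)+1 with hPdef
  have hPprime : Prime P := by
    have : ((2*b+1 : ℕ) : ℤ) = P := by push_cast; ring
    rw [← this]; exact Nat.prime_iff_prime_int.mp hP
  have hP0 : 0 < P := by positivity
  have hM0 : 0 < A * P := mul_pos hA0 hP0
  obtain ⟨a, m, hma, hsf⟩ := Nat.sq_mul_squarefree (A*P).toNat
  have hMeq : A * P = (m:ℤ)^2*(a:ℤ) := by
    rw [← Int.toNat_of_nonneg hM0.le, ← hma]; push_cast; ring
  have hm0 : m ≠ 0 := by
    intro h; rw [h] at hMeq; simp at hMeq; omega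
  have hPa : P ∣ (a:ℤ) := by
    rcases (hPprime.dvd_mul.mp ⟨A, by linarith [hMeq]⟩ :
        P ∣ (m:ℤ)^2 ∨ P ∣ (a:ℤ)) with h | h
    · exfalso
      have hPm : P ∣ (m:ℤ) := hPprime.dvd_of_dvd_pow h
      obtain ⟨k, hk⟩ := hPm
      have hPne : P ≠ 0 := by omega
      have hcase : A * P = (P * (k^2*(a:ℤ))) * P := by rw [hMeq, hk]; ring
      exact hPA ⟨k^2*(a:ℤ), mul_right_cancel₀ hPne hcase⟩
    · exact h
  have ha0 : (0:ℤ) < (a:ℤ) := by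
    rcases Nat.eq_zero_or_pos a with h | h
    · exfalso; rw [h] at hMeq; simp at hMeq; omega
    · exact_mod_cast h
  have ha1 : 1 < (a:ℤ) := by
    have := Int.le_of_dvd ha0 hPa; omega
  exact ⟨a, m, hMeq, Int.squarefree_natCast.mpr hsf, hPa, ha1, hm0⟩

lemma branch_real (b : ℕ) (hb : 2 ≤ b) (hP : Nat.Prime (2*b+1)) :
    ∃ d : ℤ, 1 < d ∧ (2*(b:ℤ)+1) ∣ d ∧ HasType8_4 d := by
  have hB2 : (2:ℤ) ≤ (b:ℤ) := by exact_mod_cast hb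
  have hA0 : (0:ℤ) < 4*(b:ℤ)^4+12*(b:ℤ)^3+12*(b:ℤ)^2+6*(b:ℤ)+1 := by nlinarith
  have hPA : ¬ (2*(b:ℤ)+1) ∣ (4*(b:ℤ)^4+12*(b:ℤ)^3+12*(b:ℤ)^2+6*(b:ℤ)+1) := by
    intro hdvd
    have h16 : (2*(b:ℤ)+1) ∣ 16*(4*(b:ℤ)^4+12*(b:ℤ)^3+12*(b:ℤ)^2+6*(b:ℤ)+1)+4 :=
      ⟨32*(b:ℤ)^3+80*(b:ℤ)^2+56*(b:ℤ)+20, by ring⟩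
    have h4 : (2*(b:ℤ)+1) ∣ 4 := by
      have h := dvd_sub h16 (hdvd.mul_left 16)
      simpa using h
    have := Int.le_of_dvd (by norm_num) h4
    omega
  obtain ⟨a, m, hMeq, hsf, hPa, ha1, hm0⟩ := prep b hb hP _ hA0 hPA
  refine ⟨(a:ℤ), ha1, hPa, ?_⟩
  have hz : (((Real.sqrt (a:ℝ) : ℝ) : ℂ)) ^ 2 = (((a:ℤ):ℤ) : ℂ) := by
    rw [← Complex.ofReal_pow, Real.sq_sqrt (by positivity)]
    push_cast; ring
  have hbq : (2:ℚ) ≤ (b:ℚ) := by exact_mod_cast hb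
  have hb0 : (b:ℚ) ≠ 0 := by positivity
  have hb10 : (b:ℚ)+1 ≠ 0 := by positivity
  have hP0q : 2*(b:ℚ)+1 ≠ 0 := by positivity
  have hx0 : ((b:ℚ)+1)/(b:ℚ) ≠ 0 := div_ne_zero hb10 hb0
  have hxgt : 1 < ((b:ℚ)+1)/(b:ℚ) := by
    rw [lt_div_iff₀ (by linarith)]; linarith
  have hx1 : (((b:ℚ)+1)/(b:ℚ))^2 ≠ 1 := (one_lt_pow₀ hxgt two_ne_zero).ne'
  have he : (m:ℚ)/(((b:ℚ)+1)*(2*(b:ℚ)+1)) ≠ 0 :=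
    div_ne_zero (Nat.cast_ne_zero.mpr hm0) (mul_ne_zero hb10 hP0q)
  have hMq : (4*(b:ℚ)^4+12*(b:ℚ)^3+12*(b:ℚ)^2+6*(b:ℚ)+1) * (2*(b:ℚ)+1)
      = (m:ℚ)^2*(a:ℚ) := by exact_mod_cast hMeq
  have hed : ((m:ℚ)/(((b:ℚ)+1)*(2*(b:ℚ)+1)))^2*((a:ℤ):ℚ)
      = (4*(b:ℚ)^4+12*(b:ℚ)^3+12*(b:ℚ)^2+6*(b:ℚ)+1)/(((b:ℚ)+1)^2*(2*(b:ℚ)+1)) := by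
    push_cast
    rw [div_pow, div_mul_eq_mul_div, div_eq_div_iff (by positivity) (by positivity)]
    linear_combination (-(((b:ℚ)+1)^2*(2*(b:ℚ)+1)))*hMq
  have hrel : (((b:ℚ)+1)/(b:ℚ))^4 + 2*(((b:ℚ)+1)/(b:ℚ))^3 + 2*(((b:ℚ)+1)/(b:ℚ)) - 1
      = ((m:ℚ)/(((b:ℚ)+1)*(2*(b:ℚ)+1)))^2 * (((a:ℤ):ℤ):ℚ)
        * ((((b:ℚ)+1)/(b:ℚ))^2 * ((((b:ℚ)+1)/(b:ℚ))^2 - 1)) := by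
    rw [show ((((a:ℤ):ℤ)):ℚ) = (((a:ℤ)):ℚ) from by push_cast; ring, hed]
    field_simp
    ring
  exact construct hsf (by omega) hz _ _ hx0 hx1 he hrel

lemma branch_imag (b : ℕ) (hb : 2 ≤ b) (hP : Nat.Prime (2*b+1)) :
    ∃ d : ℤ, d < 0 ∧ (2*(b:ℤ)+1) ∣ (-d) ∧ HasType8_4 d := by
  have hB2 : (2:ℤ) ≤ (b:ℤ) := by exact_mod_cast hb
  have hA0 : (0:ℤ) < 4*(b:ℤ)^4+4*(b:ℤ)^3-2*(b:ℤ)-1 := by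
    nlinarith [mul_le_mul_of_nonneg_left hB2 (show (0:ℤ) ≤ (b:ℤ)^3 by positivity),
      mul_le_mul_of_nonneg_left hB2 (show (0:ℤ) ≤ (b:ℤ) by positivity)]
  have hPA : ¬ (2*(b:ℤ)+1) ∣ (4*(b:ℤ)^4+4*(b:ℤ)^3-2*(b:ℤ)-1) := by
    intro hdvd
    have h16 : (2*(b:ℤ)+1) ∣ 16*(4*(b:ℤ)^4+4*(b:ℤ)^3-2*(b:ℤ)-1)+4 :=
      ⟨32*(b:ℤ)^3+16*(b:ℤ)^2-8*(b:ℤ)-12, by ring⟩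
    have h4 : (2*(b:ℤ)+1) ∣ 4 := by
      have h := dvd_sub h16 (hdvd.mul_left 16)
      simpa using h
    have := Int.le_of_dvd (by norm_num) h4
    omega
  obtain ⟨a, m, hMeq, hsf, hPa, ha1, hm0⟩ := prep b hb hP _ hA0 hPA
  refine ⟨-(a:ℤ), by omega, by simpa using hPa, ?_⟩
  have hsf' : Squarefree (-(a:ℤ)) := fun k hk => hsf k (dvd_neg.mp hk)
  have hz : ((Complex.I * ((Real.sqrt (a:ℝ) : ℝ) : ℂ))) ^ 2 = ((-(a:ℤ) : ℤ) : ℂ) := by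
    rw [mul_pow, Complex.I_sq, ← Complex.ofReal_pow, Real.sq_sqrt (by positivity)]
    push_cast; ring
  have hbq : (2:ℚ) ≤ (b:ℚ) := by exact_mod_cast hb
  have hb0 : (b:ℚ) ≠ 0 := by positivity
  have hb10 : (b:ℚ)+1 ≠ 0 := by positivity
  have hP0q : 2*(b:ℚ)+1 ≠ 0 := by positivity
  have hx0 : (b:ℚ)/((b:ℚ)+1) ≠ 0 := div_ne_zero hb0 hb10
  have hxlt : (b:ℚ)/((b:ℚ)+1) < 1 := by
    rw [div_lt_one (by linarith)]; linarith
  have hx1 : ((b:ℚ)/((b:ℚ)+1))^2 ≠ 1 :=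
    (pow_lt_one₀ (by positivity) hxlt two_ne_zero).ne
  have he : (m:ℚ)/((b:ℚ)*(2*(b:ℚ)+1)) ≠ 0 :=
    div_ne_zero (Nat.cast_ne_zero.mpr hm0) (mul_ne_zero hb0 hP0q)
  have hMq : (4*(b:ℚ)^4+4*(b:ℚ)^3-2*(b:ℚ)-1) * (2*(b:ℚ)+1)
      = (m:ℚ)^2*(a:ℚ) := by exact_mod_cast hMeq
  have hed : ((m:ℚ)/((b:ℚ)*(2*(b:ℚ)+1)))^2*((-(a:ℤ):ℤ):ℚ)
      = (-(4*(b:ℚ)^4+4*(b:ℚ)^3-2*(b:ℚ)-1))/((b:ℚ)^2*(2*(b:ℚ)+1)) := by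
    push_cast
    rw [div_pow, div_mul_eq_mul_div, div_eq_div_iff (by positivity) (by positivity)]
    linear_combination ((b:ℚ)^2*(2*(b:ℚ)+1))*hMq
  have hrel : ((b:ℚ)/((b:ℚ)+1))^4 + 2*((b:ℚ)/((b:ℚ)+1))^3 + 2*((b:ℚ)/((b:ℚ)+1)) - 1
      = ((m:ℚ)/((b:ℚ)*(2*(b:ℚ)+1)))^2 * ((-(a:ℤ) : ℤ):ℚ)
        * (((b:ℚ)/((b:ℚ)+1))^2 * (((b:ℚ)/((b:ℚ)+1))^2 - 1)) := by
    rw [hed]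
    field_simp
    ring
  exact construct hsf' (by omega) hz _ _ hx0 hx1 he hrel


/-- There are infinitely many real quadratic fields, and infinitely many imaginary quadratic
fields, `K = ℚ(√d)` containing an element `c` such that `G(f_c, K)` admits a subgraph of
type 8(4). -/
theorem infinitely_many_8_4_fields :
    {d : ℤ | 1 < d ∧ HasType8_4 d}.Infinite ∧ {d : ℤ | d < 0 ∧ HasType8_4 d}.Infinite := by
  constructor
  · apply Set.infinite_of_not_bddAbove
    rintro ⟨U, hU⟩
    obtain ⟨Pn, hPn, hPp⟩ := Nat.exists_infinite_primes (max (U.toNat+2) 5)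
    have h5 : 5 ≤ Pn := le_trans (le_max_right _ _) hPn
    have hodd : Pn % 2 = 1 := Nat.odd_iff.mp (hPp.odd_of_ne_two (by omega))
    obtain ⟨b, hb⟩ : ∃ b, Pn = 2*b+1 := ⟨Pn/2, by omega⟩
    have hb2 : 2 ≤ b := by omega
    obtain ⟨d, hd1, hdvd, hh⟩ := branch_real b hb2 (hb ▸ hPp)
    have hdS : d ≤ U := hU ⟨hd1, hh⟩
    have hPle : (2*(b:ℤ)+1) ≤ d := Int.le_of_dvd (by omega) hdvd
    have hU2 : U ≤ (U.toNat : ℤ) := Int.self_le_toNat U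
    have hle : (U.toNat + 2 : ℕ) ≤ Pn := le_trans (le_max_left _ _) hPn
    have hle2 : ((U.toNat + 2 : ℕ) : ℤ) ≤ 2*(b:ℤ)+1 := by exact_mod_cast (hb ▸ hle)
    push_cast at hle2
    omega
  · apply Set.infinite_of_not_bddBelow
    rintro ⟨U, hU⟩
    obtain ⟨Pn, hPn, hPp⟩ := Nat.exists_infinite_primes (max ((-U).toNat+2) 5)
    have h5 : 5 ≤ Pn := le_trans (le_max_right _ _) hPn
    have hodd : Pn % 2 = 1 := Nat.odd_iff.mp (hPp.odd_of_ne_two (by omega))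
    obtain ⟨b, hb⟩ : ∃ b, Pn = 2*b+1 := ⟨Pn/2, by omega⟩
    have hb2 : 2 ≤ b := by omega
    obtain ⟨d, hd0, hdvd, hh⟩ := branch_imag b hb2 (hb ▸ hPp)
    have hdS : U ≤ d := hU ⟨hd0, hh⟩
    have hPle : (2*(b:ℤ)+1) ≤ -d := Int.le_of_dvd (by omega) hdvd
    have hU2 : -U ≤ ((-U).toNat : ℤ) := Int.self_le_toNat (-U)
    have hle : ((-U).toNat + 2 : ℕ) ≤ Pn := le_trans (le_max_left _ _) hPn
    have hle2 : (((-U).toNat + 2 : ℕ) : ℤ) ≤ 2*(b:ℤ)+1 := by exact_mod_cast (hb ▸ hle)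
    push_cast at hle2
    omega
end

section
/- Let c ∈ ℝ and consider f_c : ℝ → ℝ, f_c(z) = z² + c. (1) If c > 1/4, then no x ∈ ℝ has bounded forward orbit under f_c. (2) If −2 ≤ c ≤ 1/4 and a = 1/2 + √(1/4 − c), then x ∈ ℝ has bounded forward orbit under f_c if and only if |x| ≤ a. (3) If c < −2 and a = 1/2 + √(1/4 − c), then −a − c ≥ 0, and every x ∈ ℝ with bounded forward orbit under f_c satisfies √(−a − c) ≤ |x| ≤ a. -/
/-!
For `c ≤ 1/4` the point `a = 1/2 + √(1/4 - c)` is the larger fixed point of `f_c`, and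
`f_c(t) - t = (t - a)(t + a - 1)`. Beyond `a` this gap is positive and increasing, so an orbit
that reaches `|t| > a` escapes to `+∞`; for `c > 1/4` the gap is at least `c - 1/4` everywhere.
Since `f_c([-a, a]) = [c, a]`, the interval `[-a, a]` is invariant exactly when `c ≥ -a`,
i.e. `a ≤ 2`, i.e. `c ≥ -2`. For `c < -2` a bounded orbit needs `f_c(x) ≥ -a`, i.e. `x² ≥ -a - c`.
-/

/-- The forward orbit of `x` under `f` is bounded in `ℝ`. -/
def BoundedOrbit (f : ℝ → ℝ) (x : ℝ) : Prop :=
  Bornology.IsBounded (Set.range fun n : ℕ => f^[n] x)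

open Set

namespace BoundedOrbit

variable {f : ℝ → ℝ} {x : ℝ}

theorem apply (h : BoundedOrbit f x) : BoundedOrbit f (f x) :=
  h.subset <| range_subset_iff.2 fun n => ⟨n + 1, Function.iterate_succ_apply f n x⟩

end BoundedOrbit

section Dynamics

variable {f : ℝ → ℝ} {x : ℝ}

theorem boundedOrbit_of_mapsTo {s : Set ℝ} (hs : Bornology.IsBounded s) (hf : MapsTo f s s)
    (hx : x ∈ s) : BoundedOrbit f x :=
  hs.subset <| range_subset_iff.2 fun n => hf.iterate n hx

theorem not_boundedOrbit_of_add_le {δ : ℝ} (hδ : 0 < δ) (h : ∀ t, x ≤ t → t + δ ≤ f t) :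
    ¬BoundedOrbit f x := by
  have hgrow : ∀ n : ℕ, x + n * δ ≤ f^[n] x := by
    intro n
    induction n with
    | zero => simp
    | succ n ih =>
      have hx : x ≤ f^[n] x := by nlinarith [n.cast_nonneg (α := ℝ)]
      rw [Function.iterate_succ_apply', Nat.cast_succ]
      linarith [h _ hx]
  intro hb
  obtain ⟨b, hb⟩ := hb.bddAbove
  obtain ⟨n, hn⟩ := exists_nat_gt ((b - x) / δ)
  have hle : f^[n] x ≤ b := hb (mem_range_self n)
  linarith [hgrow n, (div_lt_iff₀ hδ).1 hn]

end Dynamics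

section Quadratic

variable {c a x : ℝ}

theorem not_boundedOrbit_sq_add_of_quarter_lt (hc : 1 / 4 < c) (x : ℝ) :
    ¬BoundedOrbit (fun z => z ^ 2 + c) x :=
  not_boundedOrbit_of_add_le (sub_pos.2 hc) fun t _ => by nlinarith [sq_nonneg (t - 1 / 2)]

theorem sq_add_eq_of_le_quarter (hc : c ≤ 1 / 4) :
    (1 / 2 + √(1 / 4 - c)) ^ 2 + c = 1 / 2 + √(1 / 4 - c) := by
  linear_combination Real.sq_sqrt (sub_nonneg.2 hc)

theorem not_boundedOrbit_sq_add_of_lt_abs (hfix : a ^ 2 + c = a) (ha : 1 / 2 ≤ a)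
    (hx : a < |x|) : ¬BoundedOrbit (fun z => z ^ 2 + c) x := by
  intro hb
  set y := x ^ 2 + c
  have hy : a < y := by nlinarith [sq_abs x, abs_nonneg x]
  -- `t ^ 2 + c - t = (t - a) * (t + a - 1)` is increasing for `t ≥ a`
  refine not_boundedOrbit_of_add_le (δ := (y - a) * (y + a - 1)) (by nlinarith) (fun t ht => ?_)
    hb.apply
  nlinarith [mul_le_mul ht ht (by linarith) (by linarith)]

theorem abs_le_of_boundedOrbit_sq_add (hfix : a ^ 2 + c = a) (ha : 1 / 2 ≤ a)
    (hb : BoundedOrbit (fun z => z ^ 2 + c) x) : |x| ≤ a :=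
  not_lt.1 fun hx => not_boundedOrbit_sq_add_of_lt_abs hfix ha hx hb

theorem neg_sub_le_sq_of_boundedOrbit_sq_add (hfix : a ^ 2 + c = a) (ha : 1 / 2 ≤ a)
    (hb : BoundedOrbit (fun z => z ^ 2 + c) x) : -a - c ≤ x ^ 2 := by
  linarith [(abs_le.1 (abs_le_of_boundedOrbit_sq_add hfix ha hb.apply)).1]

theorem mapsTo_sq_add_Icc (hfix : a ^ 2 + c = a) (ha : 0 ≤ a) (ha₂ : a ≤ 2) :
    MapsTo (fun z => z ^ 2 + c) (Icc (-a) a) (Icc (-a) a) := by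
  intro z hz
  have hz2 : z ^ 2 ≤ a ^ 2 := sq_le_sq' hz.1 hz.2
  constructor <;> nlinarith [sq_nonneg z]

theorem boundedOrbit_sq_add_iff (hfix : a ^ 2 + c = a) (ha : 1 / 2 ≤ a) (ha₂ : a ≤ 2) :
    BoundedOrbit (fun z => z ^ 2 + c) x ↔ |x| ≤ a :=
  ⟨abs_le_of_boundedOrbit_sq_add hfix ha, fun hx =>
    boundedOrbit_of_mapsTo (Metric.isBounded_Icc _ _) (mapsTo_sq_add_Icc hfix (by linarith) ha₂)
      (abs_le.1 hx)⟩

end Quadratic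

/-- The real filled Julia set of `f_c(z) = z² + c`:
(1) if `c > 1/4` it contains no real point;
(2) if `-2 ≤ c ≤ 1/4` its real points are exactly `[-a, a]` where `a = 1/2 + √(1/4 - c)`;
(3) if `c < -2` then `-a - c ≥ 0` and its real points lie in
`[-a, -√(-a - c)] ∪ [√(-a - c), a]`. -/
theorem real_filledJulia_trichotomy (c : ℝ) :
    (1 / 4 < c → ∀ x : ℝ, ¬BoundedOrbit (fun z => z ^ 2 + c) x) ∧
    (-2 ≤ c → c ≤ 1 / 4 →
      ∀ x : ℝ, BoundedOrbit (fun z => z ^ 2 + c) x ↔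
        |x| ≤ 1 / 2 + Real.sqrt (1 / 4 - c)) ∧
    (c < -2 →
      0 ≤ -(1 / 2 + Real.sqrt (1 / 4 - c)) - c ∧
      ∀ x : ℝ, BoundedOrbit (fun z => z ^ 2 + c) x →
        Real.sqrt (-(1 / 2 + Real.sqrt (1 / 4 - c)) - c) ≤ |x| ∧
        |x| ≤ 1 / 2 + Real.sqrt (1 / 4 - c)) := by
  set a := 1 / 2 + √(1 / 4 - c)
  have ha : 1 / 2 ≤ a := le_add_of_nonneg_right (Real.sqrt_nonneg _)
  refine ⟨not_boundedOrbit_sq_add_of_quarter_lt, fun hc₂ hc x => ?_, fun hc => ?_⟩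
  · have hfix : a ^ 2 + c = a := sq_add_eq_of_le_quarter hc
    exact boundedOrbit_sq_add_iff hfix ha (by nlinarith)
  · have hfix : a ^ 2 + c = a := sq_add_eq_of_le_quarter (by linarith)
    have ha₂ : 2 < a := by nlinarith
    refine ⟨by nlinarith, fun x hb => ⟨?_, abs_le_of_boundedOrbit_sq_add hfix ha hb⟩⟩
    rw [← Real.sqrt_sq_eq_abs]
    exact Real.sqrt_le_sqrt (neg_sub_le_sq_of_boundedOrbit_sq_add hfix ha hb)
end

section
/- Let K be a field equipped with a multiplicative nonarchimedean absolute value ‖·‖ (i.e., K is a normed field in which ‖x + y‖ ≤ max{‖x‖, ‖y‖} for all x, y), and let c ∈ K. (1) If ‖c‖ ≤ 1, then x ∈ K has bounded forward orbit under f_c(z) = z² + c if and only if ‖x‖ ≤ 1. (2) If ‖c‖ > 1, then every x ∈ K with bounded forward orbit under f_c satisfies ‖x‖² = ‖c‖. -/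
/-- Filled Julia sets of `f_c(z) = z² + c` over a field with a multiplicative nonarchimedean
absolute value: (1) if `‖c‖ ≤ 1`, then `x` has bounded forward orbit iff `‖x‖ ≤ 1`;
(2) if `‖c‖ > 1`, then any `x` with bounded forward orbit satisfies `‖x‖² = ‖c‖`. -/
theorem nonarchimedean_filledJulia (K : Type*) [NormedField K]
    (hna : ∀ x y : K, ‖x + y‖ ≤ max ‖x‖ ‖y‖) (c : K) :
    (‖c‖ ≤ 1 →
      ∀ x : K, (∃ M : ℝ, ∀ n : ℕ, ‖(fun z : K => z ^ 2 + c)^[n] x‖ ≤ M) ↔ ‖x‖ ≤ 1) ∧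
    (1 < ‖c‖ →
      ∀ x : K, (∃ M : ℝ, ∀ n : ℕ, ‖(fun z : K => z ^ 2 + c)^[n] x‖ ≤ M) → ‖x‖ ^ 2 = ‖c‖) := by
  set f : K → K := fun z => z ^ 2 + c with hf
  -- ultrametric equality when norms differ
  have heq : ∀ a b : K, ‖b‖ < ‖a‖ → ‖a + b‖ = ‖a‖ := by
    intro a b h
    refine le_antisymm ((hna a b).trans (by simp [le_of_lt h])) ?_
    by_contra hlt
    push_neg at hlt
    have h2 : ‖a‖ ≤ max ‖a + b‖ ‖b‖ := by
      have := hna (a + b) (-b)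
      simpa using this
    rcases max_cases ‖a + b‖ ‖b‖ with ⟨h1, _⟩ | ⟨h1, _⟩ <;> linarith
  -- escape lemma
  have key : ∀ z : K, 1 < ‖z‖ → ‖c‖ < ‖z‖ ^ 2 →
      ¬ ∃ M : ℝ, ∀ n : ℕ, ‖f^[n] z‖ ≤ M := by
    rintro z hz hcz ⟨M, hM⟩
    have main : ∀ n, ‖z‖ ^ (n + 1) ≤ ‖f^[n] z‖ ∧ 1 < ‖f^[n] z‖ ∧ ‖c‖ < ‖f^[n] z‖ ^ 2 := by
      intro n
      induction n with
      | zero => exact ⟨by simp, hz, hcz⟩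
      | succ n ih =>
        obtain ⟨h1, h2, h3⟩ := ih
        have hstep : ‖f^[n + 1] z‖ = ‖f^[n] z‖ ^ 2 := by
          rw [Function.iterate_succ_apply']
          have := heq ((f^[n] z) ^ 2) c (by rwa [norm_pow])
          rw [norm_pow] at this
          simpa [hf] using this
        have hz1 : (1 : ℝ) ≤ ‖z‖ := le_of_lt hz
        have hle : ‖z‖ ≤ ‖z‖ ^ (n + 1) := le_self_pow₀ hz1 (Nat.succ_ne_zero n)
        refine ⟨?_, ?_, ?_⟩
        · rw [hstep, pow_succ]
          have hzn : (0 : ℝ) ≤ ‖z‖ ^ (n + 1) := by positivity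
          calc ‖z‖ ^ (n + 1) * ‖z‖ ≤ ‖f^[n] z‖ * ‖f^[n] z‖ := by nlinarith
            _ = ‖f^[n] z‖ ^ 2 := by ring
        · rw [hstep]; nlinarith
        · rw [hstep]
          nlinarith [sq_nonneg (‖f^[n] z‖), sq_nonneg (‖f^[n] z‖ ^ 2 - 1)]
    obtain ⟨n, hn⟩ := pow_unbounded_of_one_lt M hz
    have h1 := (main n).1
    have h2 : ‖z‖ ^ n ≤ ‖z‖ ^ (n + 1) := pow_le_pow_right₀ (le_of_lt hz) (Nat.le_succ n)
    have := hM n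
    linarith
  constructor
  · intro hc x
    constructor
    · rintro ⟨M, hM⟩
      by_contra hx
      push_neg at hx
      exact key x hx (by nlinarith) ⟨M, hM⟩
    · intro hx
      refine ⟨1, fun n => ?_⟩
      induction n with
      | zero => simpa using hx
      | succ n ih =>
        rw [Function.iterate_succ_apply']
        calc ‖f (f^[n] x)‖ ≤ max ‖(f^[n] x) ^ 2‖ ‖c‖ := hna _ _
          _ ≤ 1 := by
            rw [norm_pow]
            exact max_le (by nlinarith [norm_nonneg (f^[n] x)]) hc
  · rintro hc x ⟨M, hM⟩
    by_contra hne
    rcases lt_or_gt_of_ne hne with hlt | hgt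
    · -- ‖x‖^2 < ‖c‖ : after one step norm is ‖c‖
      have hy : ‖f x‖ = ‖c‖ := by
        have := heq c (x ^ 2) (by rwa [norm_pow])
        rw [add_comm] at this
        simpa [hf] using this
      have hy1 : 1 < ‖f x‖ := by rw [hy]; exact hc
      have hy2 : ‖c‖ < ‖f x‖ ^ 2 := by rw [hy]; nlinarith
      refine key (f x) hy1 hy2 ⟨M, fun n => ?_⟩
      rw [← Function.iterate_succ_apply]
      exact hM (n + 1)
    · -- ‖c‖ < ‖x‖^2
      have hx1 : 1 < ‖x‖ := by nlinarith [norm_nonneg x]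
      exact key x hx1 hgt ⟨M, hM⟩
end

section
/- Let k be a number field, let K/k be a field extension with [K : k] = 2, and let a, b, c, d ∈ k with a ≠ 0. Suppose x, y ∈ K satisfy y² = a·x³ + b·x² + c·x + d and x does not lie in (the image of) k. Then there exist x₀, y₀, v ∈ k such that y₀² = a·x₀³ + b·x₀² + c·x₀ + d, y = y₀ + v·(x − x₀), and x² + ((a·x₀ − v² + b)/a)·x + ((a·x₀² + v²·x₀ + b·x₀ − 2·y₀·v + c)/a) = 0. -/
/-!
Since `[K : k] = 2` and `x ∉ k`, `K = k ⊕ k x`; write `y = r + v x` and `x² = s + t x`.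
The line `Y = r + v X` then meets the cubic at the roots of `X² - t X - s`, the minimal
polynomial of `x`, so `a X³ + b X² + c X + d - (r + v X)²` is `a (X² - t X - s)` times a
linear factor over `k`. Its root `x₀ = (v² - b) / a - t` (Vieta) is the `k`-rational third intersection point,
with `y₀ = r + v x₀`.
-/

theorem linearIndependent_one_of_notMem_range {k K : Type*} [Field k] [Ring K] [Nontrivial K]
    [Algebra k K] {x : K} (hx : x ∉ Set.range (algebraMap k K)) :
    LinearIndependent k ![1, x] :=
  (LinearIndependent.pair_iff' one_ne_zero).2 fun r hr =>
    hx ⟨r, by rwa [Algebra.algebraMap_eq_smul_one]⟩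

theorem exists_eq_algebraMap_add_algebraMap_mul {k K : Type*} [Field k] [Ring K] [Algebra k K]
    (hdeg : Module.finrank k K = 2) {x : K} (hx : x ∉ Set.range (algebraMap k K)) (z : K) :
    ∃ r v : k, z = algebraMap k K r + algebraMap k K v * x := by
  have : Nontrivial K := Module.nontrivial_of_finrank_pos (R := k) (by omega)
  have hspan := (linearIndependent_one_of_notMem_range hx).span_eq_top_of_card_eq_finrank
    (by simp [hdeg])
  have hz : z ∈ Submodule.span k {1, x} := by
    rw [← Matrix.range_cons_cons_empty, hspan]; trivial
  obtain ⟨r, v, hrv⟩ := Submodule.mem_span_pair.1 hz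
  exact ⟨r, v, by rw [← hrv, Algebra.smul_def, Algebra.smul_def, mul_one]⟩

theorem cubic_sub_sq_eq_mul_of_rem_eq_zero {R : Type*} [CommRing R] {a b c d r v s t x₀ : R}
    (hrem₀ : d - r ^ 2 + (b - v ^ 2 + a * t) * s = 0)
    (hrem₁ : c - 2 * r * v + (b - v ^ 2 + a * t) * t + a * s = 0)
    (hx₀ : a * x₀ = v ^ 2 - b - a * t) (X : R) :
    a * X ^ 3 + b * X ^ 2 + c * X + d - (r + v * X) ^ 2 = a * (X - x₀) * (X ^ 2 - t * X - s) := by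
  linear_combination hrem₀ + X * hrem₁ + (X ^ 2 - t * X - s) * hx₀

theorem elliptic_nonobvious_quadratic_points_general
    (k K : Type*) [Field k] [Field K] [Algebra k K]
    (hdeg : Module.finrank k K = 2)
    (a b c d : k) (ha : a ≠ 0) (x y : K)
    (hcurve : y ^ 2 = algebraMap k K a * x ^ 3 + algebraMap k K b * x ^ 2 +
      algebraMap k K c * x + algebraMap k K d)
    (hx : x ∉ Set.range (algebraMap k K)) :
    ∃ x₀ y₀ v : k,
      y₀ ^ 2 = a * x₀ ^ 3 + b * x₀ ^ 2 + c * x₀ + d ∧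
      y = algebraMap k K y₀ + algebraMap k K v * (x - algebraMap k K x₀) ∧
      x ^ 2 + algebraMap k K ((a * x₀ - v ^ 2 + b) / a) * x +
        algebraMap k K ((a * x₀ ^ 2 + v ^ 2 * x₀ + b * x₀ - 2 * y₀ * v + c) / a) = 0 := by
  have hli : LinearIndependent k ![1, x] := linearIndependent_one_of_notMem_range hx
  obtain ⟨r, v, hy⟩ := exists_eq_algebraMap_add_algebraMap_mul hdeg hx y
  obtain ⟨s, t, hsq⟩ := exists_eq_algebraMap_add_algebraMap_mul hdeg hx (x ^ 2)
  -- the remainder of `a X³ + b X² + c X + d - (r + v X)²` modulo `X² - t X - s`, evaluated at `x`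
  have hrem : (d - r ^ 2 + (b - v ^ 2 + a * t) * s) • (1 : K) +
      (c - 2 * r * v + (b - v ^ 2 + a * t) * t + a * s) • x = 0 := by
    simp only [Algebra.smul_def, mul_one, map_add, map_sub, map_mul, map_pow, map_ofNat]
    linear_combination (y + algebraMap k K r + algebraMap k K v * x) * hy - hcurve -
      (algebraMap k K b - algebraMap k K v ^ 2 + algebraMap k K a * (x + algebraMap k K t)) * hsq
  obtain ⟨hrem₀, hrem₁⟩ := LinearIndependent.pair_iff.1 hli _ _ hrem
  obtain ⟨x₀, hx₀⟩ : ∃ x₀, a * x₀ = v ^ 2 - b - a * t :=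
    ⟨(v ^ 2 - b) / a - t, by field_simp⟩
  have hfactor := cubic_sub_sq_eq_mul_of_rem_eq_zero hrem₀ hrem₁ hx₀ x₀
  have ht : (a * x₀ - v ^ 2 + b) / a = -t := by rw [div_eq_iff ha]; linear_combination hx₀
  have hs : (a * x₀ ^ 2 + v ^ 2 * x₀ + b * x₀ - 2 * (r + v * x₀) * v + c) / a = -s := by
    rw [div_eq_iff ha]; linear_combination (x₀ - t) * hx₀ + hrem₁
  refine ⟨x₀, r + v * x₀, v, ?_, ?_, ?_⟩
  · linear_combination -hfactor
  · rw [hy, map_add, map_mul]; ring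
  · rw [ht, hs, map_neg, map_neg]; linear_combination hsq

/-- Description of non-obvious quadratic points on an elliptic curve `y² = ax³ + bx² + cx + d`
over a number field `k`: if `K/k` is a quadratic extension and `(x, y) ∈ K²` lies on the curve
with `x ∉ k`, then there are `x₀, y₀, v ∈ k` with `(x₀, y₀)` on the curve,
`y = y₀ + v(x - x₀)`, and
`x² + ((a x₀ - v² + b)/a) x + ((a x₀² + v² x₀ + b x₀ - 2 y₀ v + c)/a) = 0`. -/
theorem elliptic_nonobvious_quadratic_points
    (k K : Type*) [Field k] [NumberField k] [Field K] [Algebra k K]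
    (hdeg : Module.finrank k K = 2)
    (a b c d : k) (ha : a ≠ 0) (x y : K)
    (hcurve : y ^ 2 = algebraMap k K a * x ^ 3 + algebraMap k K b * x ^ 2 +
      algebraMap k K c * x + algebraMap k K d)
    (hx : x ∉ Set.range (algebraMap k K)) :
    ∃ x₀ y₀ v : k,
      y₀ ^ 2 = a * x₀ ^ 3 + b * x₀ ^ 2 + c * x₀ + d ∧
      y = algebraMap k K y₀ + algebraMap k K v * (x - algebraMap k K x₀) ∧
      x ^ 2 + algebraMap k K ((a * x₀ - v ^ 2 + b) / a) * x +
        algebraMap k K ((a * x₀ ^ 2 + v ^ 2 * x₀ + b * x₀ - 2 * y₀ * v + c) / a) = 0 :=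
  elliptic_nonobvious_quadratic_points_general k K hdeg a b c d ha x y hcurve hx
end

section
/- Let K be a number field, let c ∈ K, and let f(z) = z² + c. If p ∈ K is periodic of exact period 4 for f, then there exist x, y ∈ K with y·(x² − 1) ≠ 0 such that y² = −x(x² + 1)(x² − 2x − 1), p = (x−1)/(2(x+1)) + y/(2x(x−1)), and c = (x² − 4x − 1)(x⁴ + x³ + 2x² − x + 1)/(4x(x−1)²(x+1)²); moreover the orbit of p is given by f(p) = −(x+1)/(2(x−1)) + y/(2x(x+1)), f^[2](p) = (x−1)/(2(x+1)) − y/(2x(x−1)), and f^[3](p) = −(x+1)/(2(x−1)) − y/(2x(x+1)). -/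
/-!
Write the cycle as `p₀ ↦ p₁ ↦ p₂ ↦ p₃ ↦ p₀` and put `u = p₀ + p₂`, `a = p₀ - p₂`. Subtracting the
squaring relations gives `p₁ - p₃ = u a` and `p₂ - p₀ = (p₁ + p₃)(p₁ - p₃)`, so `p₀ ≠ p₂` forces
`u (p₁ + p₃) = -1`. Adding them in pairs gives `2 (p₁ + p₃) = u² + a² + 4c` and its shift by one
step; eliminating `p₁ ± p₃` leaves `4c u²(u² - 1) = 1 - 4u³ - u⁶` and
`a² u²(u² - 1) = u⁴ + 2u³ + 2u - 1`. In characteristic `≠ 2` the first also rules out `u = ±1`, so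
the substitution `u = (x - 1)/(x + 1)`, `y = x(x - 1) a` turns the two relations into the formulas
for `c` and `y²`.
-/

structure QuadraticFourCycle {R : Type*} [CommRing R] (c p₀ p₁ p₂ p₃ : R) : Prop where
  map₀ : p₀ ^ 2 + c = p₁
  map₁ : p₁ ^ 2 + c = p₂
  map₂ : p₂ ^ 2 + c = p₃
  map₃ : p₃ ^ 2 + c = p₀

namespace QuadraticFourCycle

variable {R : Type*} [CommRing R] {c p₀ p₁ p₂ p₃ : R}

theorem sub_eq_add_mul_sub (h : QuadraticFourCycle c p₀ p₁ p₂ p₃) :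
    p₁ - p₃ = (p₀ + p₂) * (p₀ - p₂) := by
  linear_combination h.map₂ - h.map₀

theorem two_mul_add_eq (h : QuadraticFourCycle c p₀ p₁ p₂ p₃) :
    2 * (p₁ + p₃) = (p₀ + p₂) ^ 2 + (p₀ - p₂) ^ 2 + 4 * c := by
  linear_combination -2 * h.map₀ - 2 * h.map₂

theorem add_mul_add_eq_neg_one [IsDomain R] (h : QuadraticFourCycle c p₀ p₁ p₂ p₃)
    (hne : p₀ ≠ p₂) : (p₀ + p₂) * (p₁ + p₃) = -1 := by
  have key : (p₀ - p₂) * ((p₀ + p₂) * (p₁ + p₃) + 1) = 0 := by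
    linear_combination -(p₁ + p₃) * h.sub_eq_add_mul_sub + h.map₁ - h.map₃
  linear_combination (mul_eq_zero.mp key).resolve_left (sub_ne_zero.mpr hne)

theorem sq_sub_mul_add_eq [IsDomain R] (h : QuadraticFourCycle c p₀ p₁ p₂ p₃) (hne : p₀ ≠ p₂) :
    (p₀ - p₂) ^ 2 * (p₀ + p₂) = -(p₀ + p₂) ^ 3 - 4 * c * (p₀ + p₂) - 2 := by
  linear_combination -(p₀ + p₂) * h.two_mul_add_eq + 2 * h.add_mul_add_eq_neg_one hne

theorem four_mul_c_mul_eq [IsDomain R] (h : QuadraticFourCycle c p₀ p₁ p₂ p₃) (hne : p₀ ≠ p₂) :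
    4 * c * ((p₀ + p₂) ^ 2 * ((p₀ + p₂) ^ 2 - 1)) =
      1 - 4 * (p₀ + p₂) ^ 3 - (p₀ + p₂) ^ 6 := by
  have h' : QuadraticFourCycle c p₁ p₂ p₃ p₀ := ⟨h.map₁, h.map₂, h.map₃, h.map₀⟩
  have huv := h.add_mul_add_eq_neg_one hne
  linear_combination (p₀ + p₂) ^ 2 * h'.two_mul_add_eq + ((p₀ + p₂) * (p₁ + p₃) - 1) * huv +
    (p₀ + p₂) ^ 2 * (p₁ - p₃ + (p₀ + p₂) * (p₀ - p₂)) * h.sub_eq_add_mul_sub +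
    (p₀ + p₂) ^ 3 * h.sq_sub_mul_add_eq hne

theorem sq_sub_mul_sq_add_eq [IsDomain R] (h : QuadraticFourCycle c p₀ p₁ p₂ p₃)
    (hne : p₀ ≠ p₂) :
    (p₀ - p₂) ^ 2 * ((p₀ + p₂) ^ 2 * ((p₀ + p₂) ^ 2 - 1)) =
      (p₀ + p₂) ^ 4 + 2 * (p₀ + p₂) ^ 3 + 2 * (p₀ + p₂) - 1 := by
  linear_combination (p₀ + p₂) * ((p₀ + p₂) ^ 2 - 1) * h.sq_sub_mul_add_eq hne -
    h.four_mul_c_mul_eq hne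

theorem add_ne_zero_of_ne [IsDomain R] (h : QuadraticFourCycle c p₀ p₁ p₂ p₃) (hne : p₀ ≠ p₂) :
    p₀ + p₂ ≠ 0 :=
  left_ne_zero_of_mul (h.add_mul_add_eq_neg_one hne ▸ neg_ne_zero.mpr one_ne_zero)

theorem sq_add_ne_one [IsDomain R] [NeZero (2 : R)] (h : QuadraticFourCycle c p₀ p₁ p₂ p₃)
    (hne : p₀ ≠ p₂) : (p₀ + p₂) ^ 2 ≠ 1 := by
  intro h1
  have : 2 ^ 2 * (p₀ + p₂) ^ 3 = 0 := by
    linear_combination h.four_mul_c_mul_eq hne -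
      (4 * c * (p₀ + p₂) ^ 2 + (p₀ + p₂) ^ 4 + (p₀ + p₂) ^ 2 + 1) * h1
  simp [h.add_ne_zero_of_ne hne, two_ne_zero] at this

end QuadraticFourCycle

theorem exists_eq_sub_one_div_add_one {F : Type*} [Field F] [NeZero (2 : F)] {u : F}
    (hu0 : u ≠ 0) (hu1 : u ^ 2 ≠ 1) :
    ∃ x : F, x ≠ 0 ∧ x - 1 ≠ 0 ∧ x + 1 ≠ 0 ∧ u = (x - 1) / (x + 1) := by
  obtain ⟨hu1, hu1'⟩ := sq_ne_one_iff.mp hu1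
  have h1u : 1 - u ≠ 0 := sub_ne_zero.mpr hu1.symm
  have hxm : (1 + u) / (1 - u) - 1 = 2 * u / (1 - u) := by field_simp; ring
  have hxp : (1 + u) / (1 - u) + 1 = 2 / (1 - u) := by field_simp; ring
  refine ⟨(1 + u) / (1 - u), div_ne_zero ?_ h1u, ?_, ?_, ?_⟩
  · rwa [add_comm, ← sub_neg_eq_add, sub_ne_zero]
  · rw [hxm]; exact div_ne_zero (mul_ne_zero two_ne_zero hu0) h1u
  · rw [hxp]; exact div_ne_zero two_ne_zero h1u
  · rw [hxm, hxp]; field_simp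

namespace QuadraticFourCycle

variable {F : Type*} [Field F] [NeZero (2 : F)] {c p₀ p₁ p₂ p₃ x : F}

theorem c_eq_of_add_eq (h : QuadraticFourCycle c p₀ p₁ p₂ p₃) (hne : p₀ ≠ p₂) (hx0 : x ≠ 0)
    (hxm : x - 1 ≠ 0) (hxp : x + 1 ≠ 0) (hu : p₀ + p₂ = (x - 1) / (x + 1)) :
    c = (x ^ 2 - 4 * x - 1) * (x ^ 4 + x ^ 3 + 2 * x ^ 2 - x + 1) /
      (4 * x * (x - 1) ^ 2 * (x + 1) ^ 2) := by
  have H := h.four_mul_c_mul_eq hne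
  rw [hu] at H
  field_simp at H
  rw [eq_div_iff (by simp [hx0, hxm, hxp, show (4 : F) = 2 ^ 2 by norm_num, two_ne_zero])]
  apply mul_left_cancel₀ (pow_ne_zero 2 (two_ne_zero' F))
  linear_combination -H

theorem sq_eq_of_add_eq (h : QuadraticFourCycle c p₀ p₁ p₂ p₃) (hne : p₀ ≠ p₂)
    (hxp : x + 1 ≠ 0) (hu : p₀ + p₂ = (x - 1) / (x + 1)) :
    (x * (x - 1) * (p₀ - p₂)) ^ 2 = -x * (x ^ 2 + 1) * (x ^ 2 - 2 * x - 1) := by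
  have H := h.sq_sub_mul_sq_add_eq hne
  rw [hu] at H
  field_simp at H
  apply mul_left_cancel₀ (pow_ne_zero 2 (two_ne_zero' F))
  linear_combination -x * H

theorem exists_parametrization (h : QuadraticFourCycle c p₀ p₁ p₂ p₃) (hne : p₀ ≠ p₂) :
    ∃ x y : F, y * (x ^ 2 - 1) ≠ 0 ∧
      y ^ 2 = -x * (x ^ 2 + 1) * (x ^ 2 - 2 * x - 1) ∧
      p₀ = (x - 1) / (2 * (x + 1)) + y / (2 * x * (x - 1)) ∧
      c = (x ^ 2 - 4 * x - 1) * (x ^ 4 + x ^ 3 + 2 * x ^ 2 - x + 1) /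
        (4 * x * (x - 1) ^ 2 * (x + 1) ^ 2) ∧
      p₁ = -(x + 1) / (2 * (x - 1)) + y / (2 * x * (x + 1)) ∧
      p₂ = (x - 1) / (2 * (x + 1)) - y / (2 * x * (x - 1)) ∧
      p₃ = -(x + 1) / (2 * (x - 1)) - y / (2 * x * (x + 1)) := by
  obtain ⟨x, hx0, hxm, hxp, hu⟩ :=
    exists_eq_sub_one_div_add_one (h.add_ne_zero_of_ne hne) (h.sq_add_ne_one hne)
  have hu' : (p₀ + p₂) * (x + 1) = x - 1 := by rw [hu]; field_simp
  have hv : (p₁ + p₃) * (x - 1) = -(x + 1) := by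
    linear_combination (x + 1) * h.add_mul_add_eq_neg_one hne - (p₁ + p₃) * hu'
  have hb : (p₁ - p₃) * (x + 1) = (x - 1) * (p₀ - p₂) := by
    linear_combination (x + 1) * h.sub_eq_add_mul_sub + (p₀ - p₂) * hu'
  refine ⟨x, x * (x - 1) * (p₀ - p₂), ?_, h.sq_eq_of_add_eq hne hxp hu, ?_, h.c_eq_of_add_eq hne hx0 hxm hxp hu,
    ?_, ?_, ?_⟩
  · rw [show x ^ 2 - 1 = (x - 1) * (x + 1) by ring]
    exact mul_ne_zero (mul_ne_zero (mul_ne_zero hx0 hxm) (sub_ne_zero.mpr hne))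
      (mul_ne_zero hxm hxp)
  · field_simp
    linear_combination hu'
  · field_simp
    linear_combination (x + 1) * hv + (x - 1) * hb
  · field_simp
    linear_combination hu'
  · field_simp
    linear_combination (x + 1) * hv - (x - 1) * hb

end QuadraticFourCycle

/-- Parametrization of 4-cycles of `f(z) = z² + c` over a number field `K`: if `p ∈ K` is
periodic of exact period 4 for `f`, then there are `x, y ∈ K` with `y(x² - 1) ≠ 0`,
`y² = -x(x² + 1)(x² - 2x - 1)`, `p = (x-1)/(2(x+1)) + y/(2x(x-1))`,
`c = (x² - 4x - 1)(x⁴ + x³ + 2x² - x + 1)/(4x(x-1)²(x+1)²)`, and the orbit of `p` is given by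
the indicated formulas. -/
theorem four_cycle_parametrization (K : Type*) [Field K] [NumberField K] (c p : K)
    (hper : (fun z : K => z ^ 2 + c)^[4] p = p)
    (hmin : ∀ k : ℕ, 1 ≤ k → k < 4 → (fun z : K => z ^ 2 + c)^[k] p ≠ p) :
    ∃ x y : K, y * (x ^ 2 - 1) ≠ 0 ∧
      y ^ 2 = -x * (x ^ 2 + 1) * (x ^ 2 - 2 * x - 1) ∧
      p = (x - 1) / (2 * (x + 1)) + y / (2 * x * (x - 1)) ∧
      c = (x ^ 2 - 4 * x - 1) * (x ^ 4 + x ^ 3 + 2 * x ^ 2 - x + 1) /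
        (4 * x * (x - 1) ^ 2 * (x + 1) ^ 2) ∧
      (fun z : K => z ^ 2 + c)^[1] p = -(x + 1) / (2 * (x - 1)) + y / (2 * x * (x + 1)) ∧
      (fun z : K => z ^ 2 + c)^[2] p = (x - 1) / (2 * (x + 1)) - y / (2 * x * (x - 1)) ∧
      (fun z : K => z ^ 2 + c)^[3] p = -(x + 1) / (2 * (x - 1)) - y / (2 * x * (x + 1)) := by
  set f := fun z : K => z ^ 2 + c
  have hcycle : QuadraticFourCycle c p (f^[1] p) (f^[2] p) (f^[3] p) :=
    ⟨rfl, (Function.iterate_succ_apply' f 1 p).symm, (Function.iterate_succ_apply' f 2 p).symm,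
      (Function.iterate_succ_apply' f 3 p).symm.trans hper⟩
  exact hcycle.exists_parametrization (hmin 2 (by norm_num) (by norm_num)).symm
end
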